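/- arXiv:2110.12538 — 7 statements merged into one kernel-verified Lean document; each statement's English description precedes it below -/
import Mathlib

section
/- For s ∈ ℝ, the integral B(s) = ∫_{a,b≥0, a+b≤1} da db / ((a+b)(1-a)(1-b))^s is finite if and only if s < 2. -/
/-!
For `0 ≤ s`, the inequality `((a+b)(1-a)(1-b))² ≥ a(1-a) b(1-b) / 4` on the simplex dominates the
integrand by `4^(s/2) ψ(a) ψ(b)` with `ψ(x) = (x(1-x))^(-s/2)`, and `∫₀¹ ψ` is the Beta integral
`B(1 - s/2, 1 - s/2)`, finite for `s < 2`. Conversely, on the sector `0 < b < a < 1/4` the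
integrand is at least `(2a)^(-s)`, and integrating out `b` leaves `∫₀^(1/4) (2a)^(-s) a da = ∞`
for `s ≥ 2`.
-/

open MeasureTheory ProbabilityTheory Real Set Filter
open scoped ENNReal

theorem lintegral_Ioo_rpow_ne_top_iff {c t : ℝ} (hc : 0 < c) :
    ∫⁻ x in Ioo 0 c, ENNReal.ofReal (x ^ t) ≠ ∞ ↔ -1 < t := by
  rw [lintegral_ofReal_ne_top_iff_integrable (by fun_prop)
    (ae_restrict_of_forall_mem measurableSet_Ioo fun x hx => rpow_nonneg hx.1.le t),
    ← IntegrableOn, intervalIntegral.integrableOn_Ioo_rpow_iff hc]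

theorem lintegral_Ioo_rpow_mul_one_sub_rpow_lt_top {p q : ℝ} (hp : -1 < p) (hq : -1 < q) :
    ∫⁻ x in Ioo (0 : ℝ) 1, ENNReal.ofReal (x ^ p * (1 - x) ^ q) < ∞ := by
  have hα : 0 < p + 1 := by linarith
  have hβ : 0 < q + 1 := by linarith
  have hc : 0 < 1 / beta (p + 1) (q + 1) := one_div_pos.2 (beta_pos hα hβ)
  have hB := lintegral_betaPDF_eq_one hα hβ
  simp only [lintegral_betaPDF, add_sub_cancel_right, mul_assoc] at hB
  rw [lintegral_congr fun x => ENNReal.ofReal_mul hc.le,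
    lintegral_const_mul' _ _ ENNReal.ofReal_ne_top] at hB
  refine lt_top_iff_ne_top.2 fun h => ?_
  rw [h, ENNReal.mul_top (ENNReal.ofReal_pos.2 hc).ne'] at hB
  exact ENNReal.top_ne_one hB

theorem setLIntegral_regionBetween_comp_fst {α : Type*} [MeasurableSpace α] {μ : Measure α}
    [SFinite μ] {f g : α → ℝ} {s : Set α} (hf : Measurable f) (hg : Measurable g)
    (hs : MeasurableSet s) {φ : α → ℝ≥0∞} (hφ : Measurable φ) :
    ∫⁻ p in regionBetween f g s, φ p.1 ∂μ.prod volume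
      = ∫⁻ x in s, φ x * ENNReal.ofReal (g x - f x) ∂μ := by
  rw [← withDensity_apply _ (measurableSet_regionBetween hf hg hs), ← prod_withDensity_left hφ,
    volume_regionBetween_eq_lintegral' hf hg hs,
    setLIntegral_withDensity_eq_setLIntegral_mul _ hφ (by fun_prop) hs]
  rfl

def unitSimplex : Set (ℝ × ℝ) := {p | 0 ≤ p.1 ∧ 0 ≤ p.2 ∧ p.1 + p.2 ≤ 1}

def simplexPoly (p : ℝ × ℝ) : ℝ := (p.1 + p.2) * (1 - p.1) * (1 - p.2)

@[fun_prop]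
theorem measurable_simplexPoly : Measurable simplexPoly := by
  unfold simplexPoly; fun_prop

theorem unitSimplex_subset_Icc : unitSimplex ⊆ Icc (0 : ℝ) 1 ×ˢ Icc (0 : ℝ) 1 := by
  rintro ⟨a, b⟩ ⟨ha, hb, hab⟩
  exact ⟨⟨ha, by linarith⟩, hb, by linarith⟩

theorem simplexPoly_nonneg {p : ℝ × ℝ} (hp : p ∈ unitSimplex) : 0 ≤ simplexPoly p := by
  obtain ⟨ha, hb, hab⟩ := hp
  unfold simplexPoly
  have : 0 ≤ 1 - p.1 := by linarith
  have : 0 ≤ 1 - p.2 := by linarith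
  positivity

theorem simplexPoly_le_add {p : ℝ × ℝ} (hp : p ∈ unitSimplex) : simplexPoly p ≤ p.1 + p.2 := by
  obtain ⟨ha, hb, hab⟩ := hp
  unfold simplexPoly
  nlinarith [mul_nonneg ha hb, mul_nonneg (add_nonneg ha hb) (mul_nonneg ha hb)]

theorem simplexPoly_pos {p : ℝ × ℝ} (h₁ : p.1 < 1) (h₂ : p.2 < 1)
    (hpos : 0 < p.1 + p.2) : 0 < simplexPoly p := by
  unfold simplexPoly
  have : 0 < 1 - p.1 := by linarith
  have : 0 < 1 - p.2 := by linarith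
  positivity

theorem mul_one_sub_mul_le_sq_simplexPoly {p : ℝ × ℝ} (hp : p ∈ unitSimplex) :
    p.1 * (1 - p.1) * (p.2 * (1 - p.2)) / 4 ≤ simplexPoly p ^ 2 := by
  obtain ⟨ha, hb, hab⟩ := hp
  unfold simplexPoly
  have h1a : 0 ≤ 1 - p.1 := by linarith
  have h1b : 0 ≤ 1 - p.2 := by linarith
  -- near the origin `(1 - a)(1 - b) ≥ 1/4`, away from it `(a + b)² ≥ 1/4`
  have key : p.1 * p.2 ≤ 4 * (p.1 + p.2) ^ 2 * ((1 - p.1) * (1 - p.2)) := by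
    rcases le_total (p.1 + p.2) (1 / 2) with h | h
    · nlinarith [sq_nonneg (p.1 - p.2), mul_nonneg ha hb]
    · have : p.2 * p.1 ≤ (1 - p.1) * (1 - p.2) :=
        mul_le_mul (by linarith) (by linarith) ha h1a
      have : 1 ≤ 4 * (p.1 + p.2) ^ 2 := by nlinarith
      nlinarith [mul_le_mul_of_nonneg_right this (mul_nonneg h1a h1b)]
  nlinarith [mul_nonneg h1a h1b]

theorem simplexPoly_rpow_neg_le {s : ℝ} (hs : 0 ≤ s) {p : ℝ × ℝ} (hp : p ∈ unitSimplex)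
    (h₁ : p.1 ∈ Ioo 0 1) (h₂ : p.2 ∈ Ioo 0 1) :
    simplexPoly p ^ (-s) ≤
      4 ^ (s / 2) * ((p.1 * (1 - p.1)) ^ (-(s / 2)) * (p.2 * (1 - p.2)) ^ (-(s / 2))) := by
  have hpos := simplexPoly_pos h₁.2 h₂.2 (by linarith [h₁.1, h₂.1])
  have h₁' : 0 < p.1 * (1 - p.1) := mul_pos h₁.1 (sub_pos.2 h₁.2)
  have h₂' : 0 < p.2 * (1 - p.2) := mul_pos h₂.1 (sub_pos.2 h₂.2)
  calc simplexPoly p ^ (-s) = (simplexPoly p ^ 2) ^ (-(s / 2)) := by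
        rw [← rpow_natCast, ← rpow_mul hpos.le]
        ring_nf
    _ ≤ (p.1 * (1 - p.1) * (p.2 * (1 - p.2)) / 4) ^ (-(s / 2)) :=
        rpow_le_rpow_of_nonpos (by positivity) (mul_one_sub_mul_le_sq_simplexPoly hp)
          (by linarith)
    _ = _ := by
        rw [div_rpow (by positivity) (by norm_num), mul_rpow h₁'.le h₂'.le,
          rpow_neg (by norm_num : (0 : ℝ) ≤ 4), div_inv_eq_mul, mul_comm]

theorem setLIntegral_simplexPoly_rpow_neg_lt_top_of_nonpos {s : ℝ} (hs : s ≤ 0) :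
    ∫⁻ p in unitSimplex, ENNReal.ofReal (simplexPoly p ^ (-s)) < ∞ := by
  refine setLIntegral_lt_top_of_le_nnreal ?_ ⟨1, fun p hp => ?_⟩
  · exact ne_top_of_le_ne_top (isCompact_Icc.prod isCompact_Icc).measure_lt_top.ne
      (measure_mono unitSimplex_subset_Icc)
  · simpa using rpow_le_one (simplexPoly_nonneg hp) ((simplexPoly_le_add hp).trans hp.2.2)
      (neg_nonneg.2 hs)

theorem setLIntegral_simplexPoly_rpow_neg_lt_top_of_nonneg {s : ℝ} (h0 : 0 ≤ s) (hs : s < 2) :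
    ∫⁻ p in unitSimplex, ENNReal.ofReal (simplexPoly p ^ (-s)) < ∞ := by
  set ψ : ℝ → ℝ≥0∞ := fun x => ENNReal.ofReal ((x * (1 - x)) ^ (-(s / 2)))
  have hψ : ∫⁻ x in Ioo (0 : ℝ) 1, ψ x < ∞ := by
    convert lintegral_Ioo_rpow_mul_one_sub_rpow_lt_top (p := -(s / 2)) (q := -(s / 2))
      (by linarith) (by linarith) using 1
    exact setLIntegral_congr_fun measurableSet_Ioo fun x hx => by
      simp only [ψ, mul_rpow hx.1.le (sub_pos.2 hx.2).le]
  set U := Ioo (0 : ℝ) 1 ×ˢ Ioo (0 : ℝ) 1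
  have hU : (unitSimplex ∩ U : Set (ℝ × ℝ)) =ᵐ[volume] unitSimplex := by
    have : U =ᵐ[volume] Icc (0 : ℝ) 1 ×ˢ Icc (0 : ℝ) 1 := by
      rw [Measure.volume_eq_prod]; exact Measure.set_prod_ae_eq Ioo_ae_eq_Icc Ioo_ae_eq_Icc
    simpa only [inter_eq_left.2 unitSimplex_subset_Icc] using
      (EventuallyEq.refl (ae volume) unitSimplex).inter this
  calc ∫⁻ p in unitSimplex, ENNReal.ofReal (simplexPoly p ^ (-s))
      = ∫⁻ p in unitSimplex ∩ U, ENNReal.ofReal (simplexPoly p ^ (-s)) := by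
        rw [Measure.restrict_congr_set hU]
    _ ≤ ∫⁻ p in unitSimplex ∩ U, ENNReal.ofReal (4 ^ (s / 2)) * (ψ p.1 * ψ p.2) :=
        setLIntegral_mono (by fun_prop) fun p ⟨hp, h₁, h₂⟩ => by
          rw [← ENNReal.ofReal_mul (rpow_nonneg (mul_nonneg h₁.1.le (sub_pos.2 h₁.2).le) _),
            ← ENNReal.ofReal_mul (by positivity)]
          exact ENNReal.ofReal_le_ofReal (simplexPoly_rpow_neg_le h0 hp h₁ h₂)
    _ ≤ ∫⁻ p in U, ENNReal.ofReal (4 ^ (s / 2)) * (ψ p.1 * ψ p.2) :=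
        lintegral_mono_set inter_subset_right
    _ = ENNReal.ofReal (4 ^ (s / 2)) * ((∫⁻ x in Ioo 0 1, ψ x) * ∫⁻ x in Ioo 0 1, ψ x) := by
        rw [lintegral_const_mul' _ _ ENNReal.ofReal_ne_top, Measure.volume_eq_prod,
          ← Measure.prod_restrict, lintegral_prod_mul (by fun_prop) (by fun_prop)]
    _ < ∞ := ENNReal.mul_lt_top ENNReal.ofReal_lt_top (ENNReal.mul_lt_top hψ hψ)

theorem setLIntegral_regionBetween_zero_id_rpow_eq_top {c t : ℝ} (hc : 0 < c) (ht : t ≤ -2) :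
    ∫⁻ p in regionBetween 0 id (Ioo 0 c), ENNReal.ofReal (p.1 ^ t) = ∞ := by
  rw [Measure.volume_eq_prod, setLIntegral_regionBetween_comp_fst measurable_zero measurable_id
    measurableSet_Ioo (φ := fun x => ENNReal.ofReal (x ^ t)) (by fun_prop)]
  rw [setLIntegral_congr_fun measurableSet_Ioo fun x (hx : x ∈ Ioo 0 c) => by
    rw [← ENNReal.ofReal_mul (rpow_nonneg hx.1.le _), Pi.zero_apply, id, sub_zero,
      ← rpow_add_one hx.1.ne']]
  simpa using mt (lintegral_Ioo_rpow_ne_top_iff hc).1 (by linarith)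

theorem setLIntegral_simplexPoly_rpow_neg_eq_top {s : ℝ} (hs : 2 ≤ s) :
    ∫⁻ p in unitSimplex, ENNReal.ofReal (simplexPoly p ^ (-s)) = ∞ := by
  have hV : regionBetween 0 id (Ioo (0 : ℝ) (1 / 4)) ⊆ unitSimplex := fun p ⟨h₁, h₂⟩ =>
    ⟨h₁.1.le, h₂.1.le, by simp only [Pi.zero_apply, id, mem_Ioo] at h₁ h₂; linarith⟩
  have hlower : ∀ p ∈ regionBetween 0 id (Ioo (0 : ℝ) (1 / 4)),
      ENNReal.ofReal (2 ^ (-s)) * ENNReal.ofReal (p.1 ^ (-s)) ≤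
        ENNReal.ofReal (simplexPoly p ^ (-s)) := by
    intro p hp
    obtain ⟨h₁, h₂⟩ := hp
    simp only [Pi.zero_apply, id, mem_Ioo] at h₁ h₂
    rw [← ENNReal.ofReal_mul (by positivity), ← mul_rpow zero_le_two h₁.1.le]
    refine ENNReal.ofReal_le_ofReal (rpow_le_rpow_of_nonpos
      (simplexPoly_pos (by linarith) (by linarith) (by linarith)) ?_ (by linarith))
    linarith [simplexPoly_le_add (hV ⟨h₁, h₂⟩)]
  refine top_unique (le_trans ?_ ((setLIntegral_mono (by fun_prop) hlower).trans
    (lintegral_mono_set hV)))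
  rw [lintegral_const_mul' _ _ ENNReal.ofReal_ne_top,
    setLIntegral_regionBetween_zero_id_rpow_eq_top (by norm_num) (by linarith),
    ENNReal.mul_top (by positivity)]

/-- `B(s) = ∫_{a,b≥0, a+b≤1} ((a+b)(1-a)(1-b))^{-s}` is finite iff `s < 2`. -/
theorem stmt_1 (s : ℝ) :
    (∫⁻ p in {p : ℝ × ℝ | 0 ≤ p.1 ∧ 0 ≤ p.2 ∧ p.1 + p.2 ≤ 1},
      ENNReal.ofReal (((p.1 + p.2) * (1 - p.1) * (1 - p.2)) ^ (-s)) ∂volume) < ⊤ ↔ s < 2 := by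
  change ∫⁻ p in unitSimplex, ENNReal.ofReal (simplexPoly p ^ (-s)) < ∞ ↔ s < 2
  refine ⟨fun h => not_le.1 fun hs => h.ne (setLIntegral_simplexPoly_rpow_neg_eq_top hs),
    fun hs => ?_⟩
  rcases le_total s 0 with h0 | h0
  · exact setLIntegral_simplexPoly_rpow_neg_lt_top_of_nonpos h0
  · exact setLIntegral_simplexPoly_rpow_neg_lt_top_of_nonneg h0 hs
end

section
/- As s → 2 from below, B(s) = ∫_{a,b≥0, a+b≤1} da db / ((a+b)(1-a)(1-b))^s is asymptotically equivalent to 3/(2-s), i.e. (2-s)·B(s) → 3. -/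
/-!
Write `u = a + b`, `x = 1 - a`, `y = 1 - b`, so that `u + x + y = 2` and `u, x, y ∈ (0, 1]` on the
triangle (off its vertices). At most one of `u, x, y` is below `1/2`, and when, say, `u` is small,
`x y ≥ 1 - u` is close to `1`; hence `(u x y)^(-s)` differs from `u^(-s) + x^(-s) + y^(-s)` by
`O(u⁻¹ + x⁻¹ + y⁻¹)` uniformly in `0 ≤ s ≤ 2`, and this error has finite integral over the
triangle. The three corner terms are exchanged by affine, measure-preserving symmetries of the
triangle, and `∫ (1 - a)^(-s) = ∫₀¹ t^(1 - s) dt = 1 / (2 - s)`. So `B(s) = 3 / (2 - s) + O(1)`.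
-/

open MeasureTheory Real Filter Set
open scoped ENNReal

lemma rpow_neg_le_inv_sq {s t : ℝ} (hs : s ≤ 2) (ht0 : 0 < t) (ht1 : t ≤ 1) :
    t ^ (-s) ≤ (t ^ 2)⁻¹ :=
  calc t ^ (-s) ≤ t ^ (-2 : ℝ) := rpow_le_rpow_of_exponent_ge ht0 ht1 (by linarith)
    _ = (t ^ 2)⁻¹ := by rw [rpow_neg ht0.le, rpow_two]

lemma rpow_neg_le_of_half_le {s t : ℝ} (hs : s ≤ 2) (ht : 1 / 2 ≤ t) (ht1 : t ≤ 1) :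
    t ^ (-s) ≤ 4 := by
  refine (rpow_neg_le_inv_sq hs (by linarith) ht1).trans ?_
  rw [inv_le_comm₀ (by positivity) (by norm_num)]
  nlinarith

lemma abs_rpow_mul_sub_le_of_corner {s u x y : ℝ} (hs0 : 0 ≤ s) (hs2 : s ≤ 2) (hu : 0 < u)
    (hx : 1 / 2 ≤ x) (hx1 : x ≤ 1) (hy : 1 / 2 ≤ y) (hy1 : y ≤ 1) (hsum : u + x + y = 2) :
    |(u * x * y) ^ (-s) - (u ^ (-s) + x ^ (-s) + y ^ (-s))| ≤ 32 * (u⁻¹ + x⁻¹ + y⁻¹) := by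
  have hu1 : u ≤ 1 := by linarith
  have hxy : 0 < x * y := by positivity
  have hxy1 : x * y ≤ 1 := by nlinarith
  -- `(1 - x) (1 - y) ≥ 0`
  have hxy_ge : 1 - u ≤ x * y := by nlinarith
  have hsplit : (u * x * y) ^ (-s) = u ^ (-s) * (x * y) ^ (-s) := by
    rw [mul_assoc, mul_rpow hu.le hxy.le]
  have hlow : 1 ≤ (x * y) ^ (-s) := one_le_rpow_of_pos_of_le_one_of_nonpos hxy hxy1 (by linarith)
  have hup : (x * y) ^ (-s) ≤ 1 + 32 * u := by
    refine (rpow_neg_le_inv_sq hs2 hxy hxy1).trans ?_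
    rw [inv_le_iff_one_le_mul₀ (by positivity)]
    have hxy4 : 1 / 4 ≤ x * y := by nlinarith
    nlinarith [mul_nonneg hu.le (by nlinarith : (0 : ℝ) ≤ (x * y) ^ 2 - 1 / 16),
      mul_le_mul_of_nonneg_right (by linarith : 1 - x * y ≤ u) (by linarith : (0 : ℝ) ≤ 1 + x * y)]
  have hu_pow : u ^ (-s) * u ≤ u⁻¹ := by
    rw [← rpow_add_one hu.ne', ← rpow_neg_one]
    exact rpow_le_rpow_of_exponent_ge hu hu1 (by linarith)
  have hus : 0 ≤ u ^ (-s) := rpow_nonneg hu.le _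
  have hx4 := rpow_neg_le_of_half_le hs2 hx hx1
  have hy4 := rpow_neg_le_of_half_le hs2 hy hy1
  have hx0 : 0 ≤ x ^ (-s) := rpow_nonneg (by linarith) _
  have hy0 : 0 ≤ y ^ (-s) := rpow_nonneg (by linarith) _
  have hxinv : 1 ≤ x⁻¹ := one_le_inv₀ (by linarith) |>.2 hx1
  have hyinv : 1 ≤ y⁻¹ := one_le_inv₀ (by linarith) |>.2 hy1
  rw [hsplit, abs_le]
  constructor <;> nlinarith

lemma abs_rpow_mul_sub_le_of_bulk {s u x y : ℝ} (hs2 : s ≤ 2)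
    (hu : 1 / 2 ≤ u) (hu1 : u ≤ 1) (hx : 1 / 2 ≤ x) (hx1 : x ≤ 1) (hy : 1 / 2 ≤ y) (hy1 : y ≤ 1) :
    |(u * x * y) ^ (-s) - (u ^ (-s) + x ^ (-s) + y ^ (-s))| ≤ 32 * (u⁻¹ + x⁻¹ + y⁻¹) := by
  have hsplit : (u * x * y) ^ (-s) = u ^ (-s) * x ^ (-s) * y ^ (-s) := by
    rw [mul_rpow (by positivity) (by linarith), mul_rpow (by linarith) (by linarith)]
  have hu4 := rpow_neg_le_of_half_le hs2 hu hu1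
  have hx4 := rpow_neg_le_of_half_le hs2 hx hx1
  have hy4 := rpow_neg_le_of_half_le hs2 hy hy1
  have hu0 : 0 ≤ u ^ (-s) := rpow_nonneg (by linarith) _
  have hx0 : 0 ≤ x ^ (-s) := rpow_nonneg (by linarith) _
  have hy0 : 0 ≤ y ^ (-s) := rpow_nonneg (by linarith) _
  have huinv : 1 ≤ u⁻¹ := one_le_inv₀ (by linarith) |>.2 hu1
  have hxinv : 1 ≤ x⁻¹ := one_le_inv₀ (by linarith) |>.2 hx1
  have hyinv : 1 ≤ y⁻¹ := one_le_inv₀ (by linarith) |>.2 hy1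
  have hprod : u ^ (-s) * x ^ (-s) * y ^ (-s) ≤ 4 * 4 * 4 := by gcongr
  rw [hsplit, abs_le]
  constructor <;> nlinarith [mul_nonneg (mul_nonneg hu0 hx0) hy0]

lemma abs_rpow_mul_sub_le {s u x y : ℝ} (hs0 : 0 ≤ s) (hs2 : s ≤ 2)
    (hu : 0 < u) (hu1 : u ≤ 1) (hx : 0 < x) (hx1 : x ≤ 1) (hy : 0 < y) (hy1 : y ≤ 1)
    (hsum : u + x + y = 2) :
    |(u * x * y) ^ (-s) - (u ^ (-s) + x ^ (-s) + y ^ (-s))| ≤ 32 * (u⁻¹ + x⁻¹ + y⁻¹) := by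
  rcases le_or_gt u (1 / 2) with hu2 | hu2
  · exact abs_rpow_mul_sub_le_of_corner hs0 hs2 hu (by linarith) hx1 (by linarith) hy1 hsum
  rcases le_or_gt x (1 / 2) with hx2 | hx2
  · have h := abs_rpow_mul_sub_le_of_corner hs0 hs2 hx (by linarith) hu1 (by linarith) hy1
      (by linarith)
    convert h using 2 <;> ring_nf
  rcases le_or_gt y (1 / 2) with hy2 | hy2
  · have h := abs_rpow_mul_sub_le_of_corner hs0 hs2 hy (by linarith) hu1 (by linarith) hx1
      (by linarith)
    convert h using 2 <;> ring_nf
  exact abs_rpow_mul_sub_le_of_bulk hs2 hu2.le hu1 hx2.le hx1 hy2.le hy1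

def triangle : Set (ℝ × ℝ) := {p | 0 ≤ p.1 ∧ 0 ≤ p.2 ∧ p.1 + p.2 ≤ 1}

lemma measurableSet_triangle : MeasurableSet triangle := by
  unfold triangle; measurability

lemma indicator_triangle {M : Type*} [Zero M] (f : ℝ × ℝ → M) (a b : ℝ) :
    triangle.indicator f (a, b) =
      (Icc 0 1).indicator (fun a => (Icc 0 (1 - a)).indicator (fun b => f (a, b)) b) a := by
  by_cases ha : a ∈ Icc (0 : ℝ) 1
  · have hmem : (a, b) ∈ triangle ↔ b ∈ Icc 0 (1 - a) :=
      ⟨fun ⟨_, hb, hab⟩ => ⟨hb, by linarith⟩, fun ⟨hb, hb1⟩ => ⟨ha.1, hb, by linarith⟩⟩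
    rw [indicator_of_mem ha]
    by_cases hb : b ∈ Icc 0 (1 - a)
    · rw [indicator_of_mem hb, indicator_of_mem (hmem.2 hb)]
    · rw [indicator_of_notMem hb, indicator_of_notMem (mt hmem.1 hb)]
  · rw [indicator_of_notMem ha, indicator_of_notMem]
    rintro ⟨h1, h2, h3⟩
    exact ha ⟨h1, by linarith⟩

lemma lintegral_triangle {f : ℝ × ℝ → ℝ≥0∞} (hf : Measurable f) :
    ∫⁻ p in triangle, f p = ∫⁻ a in Icc 0 1, ∫⁻ b in Icc 0 (1 - a), f (a, b) := by
  rw [← lintegral_indicator measurableSet_triangle, Measure.volume_eq_prod,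
    lintegral_prod _ (hf.indicator measurableSet_triangle).aemeasurable,
    ← lintegral_indicator measurableSet_Icc]
  congr 1 with a
  simp_rw [indicator_triangle]
  by_cases ha : a ∈ Icc (0 : ℝ) 1
  · simp only [indicator_of_mem ha]
    exact lintegral_indicator measurableSet_Icc _
  · simp [indicator_of_notMem ha]

lemma lintegral_triangle_comp_one_sub_fst {g : ℝ → ℝ≥0∞} (hg : Measurable g) :
    ∫⁻ p in triangle, g (1 - p.1) = ∫⁻ t in Icc 0 1, ENNReal.ofReal t * g t := by
  rw [lintegral_triangle (f := fun p => g (1 - p.1)) (by fun_prop)]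
  simp only [setLIntegral_const, Real.volume_Icc, sub_zero]
  have h := (Measure.measurePreserving_sub_left volume (1 : ℝ)).setLIntegral_comp_preimage_emb
    (measurableEmbedding_subLeft 1) (fun t => ENNReal.ofReal t * g t) (Icc 0 1)
  rw [preimage_const_sub_Icc, sub_zero, sub_self] at h
  rw [← h]
  simp_rw [mul_comm]

lemma lintegral_triangle_rpow_one_sub_fst {s : ℝ} (hs : s < 2) :
    ∫⁻ p in triangle, ENNReal.ofReal ((1 - p.1) ^ (-s)) = ENNReal.ofReal (1 / (2 - s)) := by
  rw [lintegral_triangle_comp_one_sub_fst (g := fun t => ENNReal.ofReal (t ^ (-s))) (by fun_prop),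
    setLIntegral_congr Ioc_ae_eq_Icc.symm]
  have hint : IntegrableOn (fun t : ℝ => t ^ (1 - s)) (Ioc 0 1) :=
    (intervalIntegrable_iff_integrableOn_Ioc_of_le zero_le_one).1
      (intervalIntegral.intervalIntegrable_rpow' (by linarith))
  have hval : ∫ t in Ioc 0 1, t ^ (1 - s) = 1 / (2 - s) := by
    rw [← intervalIntegral.integral_of_le zero_le_one, integral_rpow (Or.inl (by linarith)),
      one_rpow, zero_rpow (by linarith)]
    ring_nf
  rw [← hval, ofReal_integral_eq_lintegral_ofReal hint
    (ae_restrict_of_forall_mem measurableSet_Ioc fun t ht => rpow_nonneg ht.1.le _)]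
  refine setLIntegral_congr_fun measurableSet_Ioc fun t ht => ?_
  rw [← ENNReal.ofReal_mul ht.1.le, sub_eq_neg_add, rpow_add_one ht.1.ne', mul_comm]

lemma ae_rpow_one_sub_fst_nonneg (s : ℝ) :
    0 ≤ᵐ[volume.restrict triangle] fun p : ℝ × ℝ => (1 - p.1) ^ (-s) :=
  ae_restrict_of_forall_mem measurableSet_triangle fun _ ⟨_, hb, hab⟩ => rpow_nonneg (by linarith) _

lemma integrableOn_triangle_rpow_one_sub_fst {s : ℝ} (hs : s < 2) :
    IntegrableOn (fun p : ℝ × ℝ => (1 - p.1) ^ (-s)) triangle :=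
  ⟨((measurable_const.sub measurable_fst).pow_const _).aestronglyMeasurable,
    (hasFiniteIntegral_iff_ofReal (ae_rpow_one_sub_fst_nonneg s)).2 <| by
    rw [lintegral_triangle_rpow_one_sub_fst hs]; exact ENNReal.ofReal_lt_top⟩

lemma setIntegral_triangle_rpow_one_sub_fst {s : ℝ} (hs : s < 2) :
    ∫ p in triangle, (1 - p.1) ^ (-s) = 1 / (2 - s) := by
  rw [integral_eq_lintegral_of_nonneg_ae (ae_rpow_one_sub_fst_nonneg s)
    ((measurable_const.sub measurable_fst).pow_const _).aestronglyMeasurable,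
    lintegral_triangle_rpow_one_sub_fst hs, ENNReal.toReal_ofReal]
  exact div_nonneg zero_le_one (by linarith)

/-- The affine involution of the triangle fixing the vertex `(0, 1)` and exchanging `(0, 0)` with
`(1, 0)`; it exchanges `a + b` with `1 - a`. -/
def triangleFlip : ℝ × ℝ ≃ᵐ ℝ × ℝ where
  toFun p := (1 - (p.1 + p.2), p.2)
  invFun p := (1 - (p.1 + p.2), p.2)
  left_inv p := Prod.ext (by dsimp only; ring) rfl
  right_inv p := Prod.ext (by dsimp only; ring) rfl
  measurable_toFun := by simp only [Equiv.coe_fn_mk]; fun_prop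
  measurable_invFun := by simp only [Equiv.coe_fn_symm_mk]; fun_prop

lemma triangleFlip_apply (p : ℝ × ℝ) : triangleFlip p = (1 - (p.1 + p.2), p.2) := rfl

lemma measurePreserving_triangleFlip : MeasurePreserving triangleFlip :=
  ((Measure.measurePreserving_sub_left volume (1 : ℝ)).prod (MeasurePreserving.id volume)).comp
    (measurePreserving_add_prod volume volume)

lemma triangleFlip_preimage : triangleFlip ⁻¹' triangle = triangle := by
  ext p
  simp only [triangle, mem_preimage, mem_ofPred_eq]
  change 0 ≤ 1 - (p.1 + p.2) ∧ 0 ≤ p.2 ∧ 1 - (p.1 + p.2) + p.2 ≤ 1 ↔ _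
  constructor <;> rintro ⟨h1, h2, h3⟩ <;> exact ⟨by linarith, h2, by linarith⟩

lemma measurePreserving_prodComm : MeasurePreserving (MeasurableEquiv.prodComm : ℝ × ℝ ≃ᵐ ℝ × ℝ) :=
  Measure.measurePreserving_swap

lemma prodComm_preimage_triangle : MeasurableEquiv.prodComm ⁻¹' triangle = triangle := by
  ext p
  simp only [triangle, mem_preimage, mem_ofPred_eq]
  change 0 ≤ p.2 ∧ 0 ≤ p.1 ∧ p.2 + p.1 ≤ 1 ↔ _
  constructor <;> rintro ⟨h1, h2, h3⟩ <;> exact ⟨h2, h1, by linarith⟩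

section Symmetry

variable {e : ℝ × ℝ ≃ᵐ ℝ × ℝ} (he : MeasurePreserving e) (hT : e ⁻¹' triangle = triangle)
include he hT

lemma integrableOn_triangle_comp_iff {g : ℝ × ℝ → ℝ} :
    IntegrableOn (fun p => g (e p)) triangle ↔ IntegrableOn g triangle := by
  conv_lhs => rw [← hT]
  exact he.integrableOn_comp_preimage e.measurableEmbedding

lemma setIntegral_triangle_comp (g : ℝ × ℝ → ℝ) :
    ∫ p in triangle, g (e p) = ∫ p in triangle, g p := by
  conv_lhs => rw [← hT]
  exact he.setIntegral_preimage_emb e.measurableEmbedding g triangle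

end Symmetry

noncomputable def cornerSum (s : ℝ) (p : ℝ × ℝ) : ℝ :=
  (p.1 + p.2) ^ (-s) + (1 - p.1) ^ (-s) + (1 - p.2) ^ (-s)

lemma integrableOn_cornerSum_terms {s : ℝ} (hs : s < 2) :
    IntegrableOn (fun p : ℝ × ℝ => (p.1 + p.2) ^ (-s)) triangle ∧
      IntegrableOn (fun p : ℝ × ℝ => (1 - p.1) ^ (-s)) triangle ∧
      IntegrableOn (fun p : ℝ × ℝ => (1 - p.2) ^ (-s)) triangle := by
  have hx := integrableOn_triangle_rpow_one_sub_fst hs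
  have hu := (integrableOn_triangle_comp_iff measurePreserving_triangleFlip
    triangleFlip_preimage).2 hx
  have hy := (integrableOn_triangle_comp_iff measurePreserving_prodComm
    prodComm_preimage_triangle).2 hx
  simp only [triangleFlip_apply, sub_sub_cancel] at hu
  exact ⟨hu, hx, hy⟩

lemma integrableOn_cornerSum {s : ℝ} (hs : s < 2) : IntegrableOn (cornerSum s) triangle :=
  let ⟨iu, ix, iy⟩ := integrableOn_cornerSum_terms hs
  (iu.add ix).add iy

lemma setIntegral_cornerSum {s : ℝ} (hs : s < 2) :
    ∫ p in triangle, cornerSum s p = 3 / (2 - s) := by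
  obtain ⟨iu, ix, iy⟩ := integrableOn_cornerSum_terms hs
  have hu := setIntegral_triangle_comp measurePreserving_triangleFlip triangleFlip_preimage
    (fun p => (1 - p.1) ^ (-s))
  have hy := setIntegral_triangle_comp measurePreserving_prodComm prodComm_preimage_triangle
    (fun p => (1 - p.1) ^ (-s))
  simp only [triangleFlip_apply, sub_sub_cancel] at hu
  have iux : IntegrableOn (fun p : ℝ × ℝ => (p.1 + p.2) ^ (-s) + (1 - p.1) ^ (-s)) triangle :=
    iu.add ix
  unfold cornerSum
  rw [integral_add iux iy, integral_add iu ix, hu,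
    show ∫ p in triangle, (1 - p.2) ^ (-s) = _ from hy, setIntegral_triangle_rpow_one_sub_fst hs]
  ring

lemma ae_restrict_triangle_pos : ∀ᵐ p ∂(volume.restrict triangle),
    0 < p.1 + p.2 ∧ p.1 + p.2 ≤ 1 ∧ 0 < 1 - p.1 ∧ 1 - p.1 ≤ 1 ∧ 0 < 1 - p.2 ∧ 1 - p.2 ≤ 1 := by
  have hvertices : ∀ᵐ p : ℝ × ℝ, p ∉ ({(0, 0), (1, 0), (0, 1)} : Set (ℝ × ℝ)) :=
    measure_eq_zero_iff_ae_notMem.1 ((toFinite _).measure_zero _)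
  filter_upwards [ae_restrict_mem measurableSet_triangle, ae_restrict_of_ae hvertices]
    with ⟨a, b⟩ ⟨ha, hb, hab⟩ hp
  simp only [mem_insert_iff, mem_singleton_iff, Prod.mk.injEq, not_or] at hp
  refine ⟨lt_of_le_of_ne (by linarith) fun h => hp.1 ⟨by linarith, by linarith⟩, hab,
    lt_of_le_of_ne (by linarith) fun h => hp.2.1 ⟨by linarith, by linarith⟩, by linarith,
    lt_of_le_of_ne (by linarith) fun h => hp.2.2 ⟨by linarith, by linarith⟩, by linarith⟩

noncomputable def triangleIntegrand (s : ℝ) (p : ℝ × ℝ) : ℝ :=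
  ((p.1 + p.2) * (1 - p.1) * (1 - p.2)) ^ (-s)

lemma ae_abs_triangleIntegrand_sub_cornerSum_le {s : ℝ} (hs0 : 0 ≤ s) (hs2 : s ≤ 2) :
    ∀ᵐ p ∂(volume.restrict triangle),
      |triangleIntegrand s p - cornerSum s p| ≤ 32 * cornerSum 1 p := by
  filter_upwards [ae_restrict_triangle_pos] with p ⟨hu, hu1, hx, hx1, hy, hy1⟩
  simp only [triangleIntegrand, cornerSum, rpow_neg_one]
  exact abs_rpow_mul_sub_le hs0 hs2 hu hu1 hx hx1 hy hy1 (by ring)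

lemma integrableOn_triangleIntegrand_sub_cornerSum {s : ℝ} (hs0 : 0 ≤ s) (hs2 : s ≤ 2) :
    IntegrableOn (fun p => triangleIntegrand s p - cornerSum s p) triangle :=
  ((integrableOn_cornerSum one_lt_two).const_mul 32).mono'
    (by unfold triangleIntegrand cornerSum; fun_prop)
    (ae_abs_triangleIntegrand_sub_cornerSum_le hs0 hs2)

lemma abs_setIntegral_triangleIntegrand_sub_le {s : ℝ} (hs0 : 0 ≤ s) (hs2 : s < 2) :
    |(∫ p in triangle, triangleIntegrand s p) - 3 / (2 - s)| ≤ 96 := by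
  have hdiff := integrableOn_triangleIntegrand_sub_cornerSum hs0 hs2.le
  have hF : IntegrableOn (triangleIntegrand s) triangle := by
    simpa only [Pi.add_def, sub_add_cancel] using hdiff.add (integrableOn_cornerSum hs2)
  rw [← setIntegral_cornerSum hs2, ← integral_sub hF (integrableOn_cornerSum hs2)]
  calc |∫ p in triangle, triangleIntegrand s p - cornerSum s p|
      ≤ ∫ p in triangle, |triangleIntegrand s p - cornerSum s p| := abs_integral_le_integral_abs
    _ ≤ ∫ p in triangle, 32 * cornerSum 1 p :=
      integral_mono_ae hdiff.abs ((integrableOn_cornerSum one_lt_two).const_mul 32)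
        (ae_abs_triangleIntegrand_sub_cornerSum_le hs0 hs2.le)
    _ = 96 := by rw [integral_const_mul, setIntegral_cornerSum one_lt_two]; norm_num

lemma abs_two_sub_mul_setIntegral_triangleIntegrand_sub_three_le {s : ℝ} (hs0 : 0 ≤ s)
    (hs2 : s < 2) : |(2 - s) * (∫ p in triangle, triangleIntegrand s p) - 3| ≤ 96 * (2 - s) := by
  have hpos : 0 < 2 - s := by linarith
  have hfactor : (2 - s) * (∫ p in triangle, triangleIntegrand s p) - 3 =
      (2 - s) * ((∫ p in triangle, triangleIntegrand s p) - 3 / (2 - s)) := by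
    rw [mul_sub, mul_div_cancel₀ _ hpos.ne']
  rw [hfactor, abs_mul, abs_of_pos hpos, mul_comm 96]
  exact mul_le_mul_of_nonneg_left (abs_setIntegral_triangleIntegrand_sub_le hs0 hs2) hpos.le

/-- As `s → 2⁻`, `(2-s) · B(s) → 3` where
`B(s) = ∫_{a,b≥0, a+b≤1} ((a+b)(1-a)(1-b))^{-s}`. -/
theorem stmt_2 :
    Tendsto (fun s : ℝ =>
      (2 - s) * ∫ p in {p : ℝ × ℝ | 0 ≤ p.1 ∧ 0 ≤ p.2 ∧ p.1 + p.2 ≤ 1},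
        ((p.1 + p.2) * (1 - p.1) * (1 - p.2)) ^ (-s))
      (nhdsWithin 2 (Set.Iio 2)) (nhds 3) := by
  have hbound : Tendsto (fun s : ℝ => 96 * (2 - s)) (nhdsWithin 2 (Iio 2)) (nhds 0) :=
    tendsto_nhdsWithin_of_tendsto_nhds <| Continuous.tendsto' (by fun_prop) 2 0 (by norm_num)
  rw [← tendsto_sub_nhds_zero_iff]
  refine squeeze_zero_norm' ?_ hbound
  filter_upwards [Ioo_mem_nhdsLT (show (0 : ℝ) < 2 by norm_num)] with s hs
  rw [Real.norm_eq_abs]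
  exact abs_two_sub_mul_setIntegral_triangleIntegrand_sub_three_le hs.1.le hs.2
end

section
/- For any s, the integral of ((a+b)(1-a)(1-b))^{-s} over the 2-simplex {a,b ≥ 0, a+b ≤ 1} equals 2^{2-s} times the integral over the open unit square (0,1)² of (1+y)^{3(s-1)} · y^{1-s} · (1 - y²x²)^{-s} dx dy. -/
open MeasureTheory Real Set

/-!
The integrand on the simplex is symmetric under `(a, b) ↦ (b, a)`, so up to the null diagonal and
boundary the integral is twice the integral over the half `0 < a < b`, `a + b < 1`. On that half
we substitute `a + b = 2y / (1 + y)` and `a / (a + b) = (1 - x) / 2`, which maps the open unit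
square bijectively onto it with Jacobian `2y / (1 + y)³`, and turns `(a + b)(1 - a)(1 - b)` into
`2y (1 - y²x²) / (1 + y)³`.
-/

theorem MeasureTheory.Measure.addHaar_preimage_singleton_eq_zero {E : Type*}
    [NormedAddCommGroup E] [NormedSpace ℝ E] [MeasurableSpace E] [BorelSpace E]
    [FiniteDimensional ℝ E]
    (μ : Measure E) [μ.IsAddHaarMeasure] {L : E →ₗ[ℝ] ℝ} (hL : L ≠ 0) (c : ℝ) :
    μ (L ⁻¹' {c}) = 0 := by
  obtain ⟨p, rfl⟩ := LinearMap.surjective_of_ne_zero hL c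
  have : L ⁻¹' {L p} = (fun q => -p + q) ⁻¹' (LinearMap.ker L : Set E) := by
    ext q
    simp only [mem_preimage, mem_singleton_iff, SetLike.mem_coe, LinearMap.mem_ker, map_add,
      map_neg]
    rw [neg_add_eq_zero, eq_comm]
  rw [this, measure_preimage_add]
  exact Measure.addHaar_submodule μ _ (by simpa [LinearMap.ker_eq_top] using hL)

def halfSimplex : Set (ℝ × ℝ) := {p | 0 < p.1 ∧ p.1 < p.2 ∧ p.1 + p.2 < 1}

theorem measurableSet_halfSimplex : MeasurableSet halfSimplex :=
  (measurableSet_lt measurable_const measurable_fst).inter <|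
    (measurableSet_lt measurable_fst measurable_snd).inter <|
      measurableSet_lt (measurable_fst.add measurable_snd) measurable_const

theorem simplex_ae_eq_halfSimplex_union_swap :
    {p : ℝ × ℝ | 0 ≤ p.1 ∧ 0 ≤ p.2 ∧ p.1 + p.2 ≤ 1}
      =ᵐ[volume] (halfSimplex ∪ Prod.swap ⁻¹' halfSimplex : Set (ℝ × ℝ)) := by
  let fst := LinearMap.fst ℝ ℝ ℝ
  let snd := LinearMap.snd ℝ ℝ ℝ
  refine ae_eq_set.2 ⟨?_, ?_⟩
  · refine measure_mono_null (t := fst ⁻¹' {0} ∪ snd ⁻¹' {0} ∪ (fst - snd) ⁻¹' {0}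
      ∪ (fst + snd) ⁻¹' {1}) ?_ ?_
    · rintro ⟨a, b⟩ ⟨⟨ha, hb, hab⟩, hT⟩
      simp only [halfSimplex, mem_union, mem_ofPred_eq, mem_preimage, Prod.swap_prod_mk,
        not_or, not_and, not_lt] at hT
      simp only [mem_union, mem_preimage, mem_singleton_iff, LinearMap.sub_apply,
        LinearMap.add_apply, fst, snd, LinearMap.fst_apply, LinearMap.snd_apply]
      by_contra! h
      obtain ⟨⟨⟨ha0, hb0⟩, hne⟩, h1⟩ := h
      have hab' : a + b < 1 := lt_of_le_of_ne hab h1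
      rcases lt_or_gt_of_ne (sub_ne_zero.1 hne) with hlt | hgt
      · linarith [hT.1 (lt_of_le_of_ne ha (Ne.symm ha0)) hlt]
      · linarith [hT.2 (lt_of_le_of_ne hb (Ne.symm hb0)) hgt]
    · have hne : ∀ L : ℝ × ℝ →ₗ[ℝ] ℝ, L (1, 0) ≠ 0 ∨ L (0, 1) ≠ 0 → L ≠ 0 := by
        rintro L hL rfl
        simp at hL
      refine measure_union_null (measure_union_null (measure_union_null ?_ ?_) ?_) ?_ <;>
        exact Measure.addHaar_preimage_singleton_eq_zero volume (hne _ (by simp [fst, snd])) _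
  · rw [sdiff_eq_empty.2 ?_, measure_empty]
    rintro ⟨a, b⟩ (⟨h0, hlt, h1⟩ | ⟨h0, hlt, h1⟩) <;>
      simp only [mem_ofPred_eq, Prod.swap_prod_mk] at * <;>
      refine ⟨?_, ?_, ?_⟩ <;> linarith

theorem setLIntegral_simplex_eq_two_mul {f : ℝ × ℝ → ENNReal} (hf : ∀ p, f p.swap = f p) :
    ∫⁻ p in {p : ℝ × ℝ | 0 ≤ p.1 ∧ 0 ≤ p.2 ∧ p.1 + p.2 ≤ 1}, f p
      = 2 * ∫⁻ p in halfSimplex, f p := by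
  have hswap : MeasurePreserving (Prod.swap : ℝ × ℝ → ℝ × ℝ) volume volume :=
    Measure.volume_eq_prod (α := ℝ) (β := ℝ) ▸ Measure.measurePreserving_swap
  have hdisj : Disjoint halfSimplex (Prod.swap ⁻¹' halfSimplex) :=
    disjoint_left.2 fun _ hp hp' => lt_asymm hp.2.1 hp'.2.1
  rw [setLIntegral_congr simplex_ae_eq_halfSimplex_union_swap,
    lintegral_union (measurableSet_halfSimplex.preimage measurable_swap) hdisj, two_mul]
  congr 1
  simpa only [hf] using
    hswap.setLIntegral_comp_preimage_emb MeasurableEquiv.prodComm.measurableEmbedding f halfSimplex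

noncomputable def simplexChart (q : ℝ × ℝ) : ℝ × ℝ :=
  (q.2 / (1 + q.2) * (1 - q.1), q.2 / (1 + q.2) * (1 + q.1))

noncomputable def simplexChartInv (p : ℝ × ℝ) : ℝ × ℝ :=
  ((p.2 - p.1) / (p.1 + p.2), (p.1 + p.2) / (2 - (p.1 + p.2)))

noncomputable def simplexChartDeriv (q : ℝ × ℝ) : ℝ × ℝ →L[ℝ] ℝ × ℝ :=
  LinearMap.toContinuousLinearMap (Matrix.toLin (Module.Basis.finTwoProd ℝ)
    (Module.Basis.finTwoProd ℝ)
    !![-(q.2 / (1 + q.2)), (1 - q.1) / (1 + q.2) ^ 2;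
       q.2 / (1 + q.2), (1 + q.1) / (1 + q.2) ^ 2])

theorem mapsTo_simplexChart : MapsTo simplexChart (Ioo 0 1 ×ˢ Ioo 0 1) halfSimplex := by
  rintro q ⟨⟨hx0, hx1⟩, hy0, hy1⟩
  have hg : 0 < q.2 / (1 + q.2) := by positivity
  have hg1 : 2 * (q.2 / (1 + q.2)) < 1 := by
    rw [← mul_div_assoc, div_lt_one (by linarith)]
    linarith
  refine ⟨mul_pos hg (by linarith), ?_, ?_⟩ <;> simp only [simplexChart] <;> nlinarith

theorem mapsTo_simplexChartInv : MapsTo simplexChartInv halfSimplex (Ioo 0 1 ×ˢ Ioo 0 1) := by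
  rintro ⟨a, b⟩ ⟨ha, hab, hsum⟩
  dsimp only at ha hab hsum
  have hc : 0 < a + b := by linarith
  have hc2 : 0 < 2 - (a + b) := by linarith
  exact ⟨⟨div_pos (by linarith) hc, (div_lt_one hc).2 (by linarith)⟩,
    div_pos hc hc2, (div_lt_one hc2).2 (by linarith)⟩

theorem invOn_simplexChartInv :
    InvOn simplexChartInv simplexChart (Ioo 0 1 ×ˢ Ioo 0 1) halfSimplex := by
  constructor
  · rintro ⟨x, y⟩ ⟨⟨hx0, hx1⟩, hy0, hy1⟩
    have : 0 < 1 + y := by linarith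
    simp only [simplexChartInv, simplexChart, Prod.mk.injEq]
    constructor <;> field_simp <;> ring
  · rintro ⟨a, b⟩ ⟨ha, hab, hsum⟩
    dsimp only at ha hab hsum
    have hc : 0 < a + b := by linarith
    have hc2 : 0 < 2 - (a + b) := by linarith
    simp only [simplexChartInv, simplexChart, Prod.mk.injEq]
    constructor <;> field_simp <;> ring

theorem bijOn_simplexChart : BijOn simplexChart (Ioo 0 1 ×ˢ Ioo 0 1) halfSimplex :=
  invOn_simplexChartInv.bijOn mapsTo_simplexChart mapsTo_simplexChartInv

theorem hasFDerivAt_simplexChart {q : ℝ × ℝ} (hq : 1 + q.2 ≠ 0) :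
    HasFDerivAt simplexChart (simplexChartDeriv q) q := by
  have hg : HasFDerivAt (fun p : ℝ × ℝ => p.2 / (1 + p.2))
      ((1 / (1 + q.2) ^ 2) • ContinuousLinearMap.snd ℝ ℝ ℝ) q :=
    (((hasDerivAt_id q.2).div ((hasDerivAt_id q.2).const_add 1) hq).comp_hasFDerivAt q
      hasFDerivAt_snd).congr_fderiv (by simp)
  rw [simplexChartDeriv, Matrix.toLin_finTwoProd_toContinuousLinearMap]
  refine ((hg.mul (hasFDerivAt_fst.const_sub 1)).prodMk
    (hg.mul (hasFDerivAt_fst.const_add 1))).congr_fderiv ?_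
  ext <;> simp <;> ring

theorem abs_det_simplexChartDeriv {q : ℝ × ℝ} (hq : 0 ≤ q.2) :
    |(simplexChartDeriv q).det| = 2 * q.2 / (1 + q.2) ^ 3 := by
  have hdet : (simplexChartDeriv q).det = -(2 * q.2 / (1 + q.2) ^ 3) := by
    simp only [simplexChartDeriv, LinearMap.det_toContinuousLinearMap, LinearMap.det_toLin,
      Matrix.det_fin_two_of]
    field_simp
    ring
  rw [hdet, abs_neg, abs_of_nonneg (by positivity)]

theorem Real.mul_mul_rpow_neg {t u : ℝ} (ht : 0 < t) (hu : 0 ≤ u) (s : ℝ) :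
    t * (t * u) ^ (-s) = t ^ (1 - s) * u ^ (-s) := by
  rw [mul_rpow ht.le hu, ← mul_assoc, sub_eq_add_neg, rpow_add ht, rpow_one]

theorem abs_det_simplexChartDeriv_mul {q : ℝ × ℝ} (hq : q ∈ Ioo 0 1 ×ˢ Ioo 0 1) (s : ℝ) :
    |(simplexChartDeriv q).det| * (((simplexChart q).1 + (simplexChart q).2) *
        (1 - (simplexChart q).1) * (1 - (simplexChart q).2)) ^ (-s)
      = 2 ^ (1 - s) * ((1 + q.2) ^ (3 * (s - 1)) * q.2 ^ (1 - s)
          * (1 - q.2 ^ 2 * q.1 ^ 2) ^ (-s)) := by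
  obtain ⟨⟨hx0, hx1⟩, hy0, hy1⟩ := hq
  have hy : 0 < 1 + q.2 := by linarith
  have hbase : ((simplexChart q).1 + (simplexChart q).2) * (1 - (simplexChart q).1)
      * (1 - (simplexChart q).2) = 2 * q.2 / (1 + q.2) ^ 3 * (1 - q.2 ^ 2 * q.1 ^ 2) := by
    simp only [simplexChart]
    field_simp
    ring
  have hu : 0 ≤ 1 - q.2 ^ 2 * q.1 ^ 2 := by
    have hxy : q.2 * q.1 < 1 := mul_lt_one_of_nonneg_of_lt_one_left hy0.le hy1 hx1.le
    nlinarith [mul_pos hy0 hx0]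
  rw [abs_det_simplexChartDeriv hy0.le, hbase,
    Real.mul_mul_rpow_neg (by positivity) hu, div_rpow (by positivity) (by positivity),
    mul_rpow zero_le_two hy0.le, ← rpow_natCast, ← rpow_mul hy.le, div_eq_mul_inv,
    ← rpow_neg hy.le]
  push_cast
  ring_nf

/-- Change of variables identity: the integral of `((a+b)(1-a)(1-b))^{-s}` over the
2-simplex equals `2^{2-s}` times the integral over `(0,1)²` of
`(1+y)^{3(s-1)} y^{1-s} (1 - y²x²)^{-s}` (equality in `[0,∞]`). -/
theorem stmt_3 (s : ℝ) :
    (∫⁻ p in {p : ℝ × ℝ | 0 ≤ p.1 ∧ 0 ≤ p.2 ∧ p.1 + p.2 ≤ 1},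
      ENNReal.ofReal (((p.1 + p.2) * (1 - p.1) * (1 - p.2)) ^ (-s)) ∂volume)
    = ENNReal.ofReal ((2 : ℝ) ^ (2 - s)) *
      ∫⁻ q in (Set.Ioo (0:ℝ) 1) ×ˢ (Set.Ioo (0:ℝ) 1),
        ENNReal.ofReal ((1 + q.2) ^ (3 * (s - 1)) * q.2 ^ (1 - s)
          * (1 - q.2 ^ 2 * q.1 ^ 2) ^ (-s)) ∂volume := by
  have hsquare : MeasurableSet (Ioo (0 : ℝ) 1 ×ˢ Ioo (0 : ℝ) 1) :=
    measurableSet_Ioo.prod measurableSet_Ioo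
  have htwo : (2 : ℝ) ^ (2 - s) = 2 * 2 ^ (1 - s) := by
    rw [show 2 - s = 1 + (1 - s) by ring, rpow_add two_pos, rpow_one]
  have hsymm : ∀ p : ℝ × ℝ, ENNReal.ofReal (((p.swap.1 + p.swap.2) * (1 - p.swap.1) *
      (1 - p.swap.2)) ^ (-s)) = ENNReal.ofReal (((p.1 + p.2) * (1 - p.1) * (1 - p.2)) ^ (-s)) :=
    fun p => by simp only [Prod.fst_swap, Prod.snd_swap]; ring_nf
  rw [setLIntegral_simplex_eq_two_mul hsymm,
    ← bijOn_simplexChart.image_eq,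
    lintegral_image_eq_lintegral_abs_det_fderiv_mul volume hsquare
      (fun q hq => (hasFDerivAt_simplexChart (by linarith [hq.2.1])).hasFDerivWithinAt)
      bijOn_simplexChart.injOn,
    setLIntegral_congr_fun hsquare fun q hq => by
      rw [← ENNReal.ofReal_mul (abs_nonneg _), abs_det_simplexChartDeriv_mul hq,
        ENNReal.ofReal_mul (by positivity)],
    lintegral_const_mul' _ _ ENNReal.ofReal_ne_top, ← mul_assoc, htwo,
    ENNReal.ofReal_mul zero_le_two, ENNReal.ofReal_ofNat]
end

section
/- With P a product of d nonzero linear forms in e variables with nonnegative coefficients and ŝ(P) its index of integrability on (0,1]^e, the integral ∫_{(0,1]^e} P(x)^{-ŝ(P)} dx diverges (is +∞). -/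
/-!
For a set `I` of the forms, let `J` be the set of coordinates they involve and
`F_I(s) = ∫_{(0,1]^e} ∏_{i ∈ I} ℓ_i(x)^{-s} dx`. The product is homogeneous of degree `|I|` in
`x_J`, so cutting the box into the dyadic shells `2^{-n-1} < max_{j ∈ J} x_j ≤ 2^{-n}` writes
`F_I(s)` as a geometric series of ratio `2^{s|I| - |J|}` times the integral over the outer shell.
On the outer shell some `x_j` exceeds `1/2`, and there the forms involving `x_j` are bounded above
and below. Hence `F_I(s) < ∞` iff `s|I| < |J|` and `F_{I_j}(s) < ∞` for all `j ∈ J`, where `I_j`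
consists of the forms of `I` not involving `x_j`. By induction on `I`, finiteness of `F_I(s)` for
`s ≥ 0` persists slightly to the right of `s`, so the set of exponents with `F(s) < ∞` has no
largest element and `F(ŝ) = ∞`.
-/

open MeasureTheory Filter Topology Function
open scoped ENNReal

theorem lintegral_biUnion_finset_le {α β : Type*} [MeasurableSpace α] {μ : Measure α}
    (J : Finset β) (t : β → Set α) (f : α → ℝ≥0∞) :
    ∫⁻ x in ⋃ j ∈ J, t j, f x ∂μ ≤ ∑ j ∈ J, ∫⁻ x in t j, f x ∂μ := by
  classical
  induction J using Finset.induction_on with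
  | empty => simp
  | insert j J hj ih =>
    rw [Finset.set_biUnion_insert, Finset.sum_insert hj]
    exact (lintegral_union_le f _ _).trans (by gcongr)

section DiagonalAffine

variable {κ : Type*} [Fintype κ]

theorem map_diag_affine_volume (σ v : κ → ℝ) (hσ : ∀ j, 0 < σ j) :
    Measure.map (fun (x : κ → ℝ) j => σ j * x j + v j) volume
      = ENNReal.ofReal (∏ j, σ j)⁻¹ • volume := by
  classical
  have hdet : LinearMap.det (Matrix.toLin' (Matrix.diagonal σ)) = ∏ j, σ j := by
    rw [LinearMap.det_toLin', Matrix.det_diagonal]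
  have hprod : 0 < ∏ j, σ j := Finset.prod_pos fun j _ => hσ j
  have hT : (fun (x : κ → ℝ) j => σ j * x j + v j)
      = (· + v) ∘ Matrix.toLin' (Matrix.diagonal σ) := by
    ext x j
    simp [Matrix.mulVec_diagonal]
  rw [hT, ← Measure.map_map (measurable_add_const v)
      (LinearMap.continuous_of_finiteDimensional _).measurable,
    Real.map_linearMap_volume_pi_eq_smul_volume_pi (hdet ▸ hprod.ne'), Measure.map_smul,
    map_add_right_eq_self, hdet, abs_of_pos (inv_pos.2 hprod)]

theorem setLIntegral_comp_diag_affine (σ v : κ → ℝ) (hσ : ∀ j, 0 < σ j)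
    {g : (κ → ℝ) → ℝ≥0∞} (hg : Measurable g) {S : Set (κ → ℝ)} (hS : MeasurableSet S) :
    ∫⁻ y in S, g y = ENNReal.ofReal (∏ j, σ j) *
      ∫⁻ x in (fun (x : κ → ℝ) j => σ j * x j + v j) ⁻¹' S, g (fun j => σ j * x j + v j) := by
  have hprod : 0 < ∏ j, σ j := Finset.prod_pos fun j _ => hσ j
  have hT : Measurable (fun (x : κ → ℝ) j => σ j * x j + v j) := by fun_prop
  rw [← setLIntegral_map hS hg hT, map_diag_affine_volume σ v hσ, Measure.restrict_smul,
    lintegral_smul_measure, smul_eq_mul, ← mul_assoc, ← ENNReal.ofReal_mul hprod.le,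
    mul_inv_cancel₀ hprod.ne', ENNReal.ofReal_one, one_mul]

end DiagonalAffine

def unitBox (κ : Type*) : Set (κ → ℝ) := {x | ∀ j, x j ∈ Set.Ioc (0 : ℝ) 1}

def partialBox {κ : Type*} [DecidableEq κ] (J : Finset κ) (r : ℝ) : Set (κ → ℝ) :=
  {x | ∀ j, x j ∈ Set.Ioc 0 (if j ∈ J then r else 1)}

def dyadicShell {κ : Type*} [DecidableEq κ] (J : Finset κ) (n : ℕ) : Set (κ → ℝ) :=
  partialBox J (2⁻¹ ^ n) \ partialBox J (2⁻¹ ^ (n + 1))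

section Boxes

variable {κ : Type*}

theorem unitBox_eq_pi : unitBox κ = Set.univ.pi fun _ => Set.Ioc 0 1 := by
  ext x
  simp [unitBox]

theorem measurableSet_unitBox [Countable κ] : MeasurableSet (unitBox κ) :=
  unitBox_eq_pi ▸ MeasurableSet.univ_pi fun _ => measurableSet_Ioc

theorem volume_unitBox [Fintype κ] : volume (unitBox κ) = 1 := by
  simp [unitBox_eq_pi, volume_pi_pi]

theorem lintegral_unitBox_eq_two_mul_upperHalf [Fintype κ] [DecidableEq κ]
    {g : (κ → ℝ) → ℝ≥0∞} (hg : Measurable g) (j : κ) (hgj : ∀ x t, g (update x j t) = g x) :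
    ∫⁻ x in unitBox κ, g x = 2 * ∫⁻ x in {x ∈ unitBox κ | 2⁻¹ < x j}, g x := by
  set σ : κ → ℝ := fun l => if l = j then 2⁻¹ else 1
  set v : κ → ℝ := fun l => if l = j then 2⁻¹ else 0
  have hσ : ∀ l, 0 < σ l := fun l => by simp only [σ]; split_ifs <;> norm_num
  have hS : MeasurableSet {x ∈ unitBox κ | 2⁻¹ < x j} :=
    measurableSet_unitBox.inter (measurableSet_lt measurable_const (measurable_pi_apply j))
  have h := setLIntegral_comp_diag_affine σ v hσ hg hS
  have hpre : (fun (x : κ → ℝ) l => σ l * x l + v l) ⁻¹' {x ∈ unitBox κ | 2⁻¹ < x j}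
      = unitBox κ := by
    ext x
    simp only [Set.mem_preimage, unitBox, Set.mem_ofPred_eq, Set.mem_Ioc, σ, v]
    constructor
    · rintro ⟨hx, hxj⟩ l
      have := hx l
      by_cases hl : l = j
      · simp only [hl, if_true] at this hxj ⊢
        constructor <;> linarith
      · simpa [hl] using this
    · intro hx
      refine ⟨fun l => ?_, by simp only [↓reduceIte]; linarith [(hx j).1]⟩
      split_ifs <;> constructor <;> linarith [hx l]
  have hupd : ∀ x : κ → ℝ, (fun l => σ l * x l + v l) = update x j (2⁻¹ * x j + 2⁻¹) := by
    intro x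
    ext l
    by_cases hl : l = j
    · subst hl; simp [σ, v]
    · simp [σ, v, hl]
  simp only [hpre, hupd, hgj] at h
  rw [h, Finset.prod_ite_eq', if_pos (Finset.mem_univ j), ← mul_assoc,
    ENNReal.ofReal_inv_of_pos zero_lt_two, ENNReal.ofReal_ofNat,
    ENNReal.mul_inv_cancel two_ne_zero ENNReal.ofNat_ne_top, one_mul]

variable [DecidableEq κ] (J : Finset κ)

theorem measurableSet_partialBox [Countable κ] (r : ℝ) : MeasurableSet (partialBox J r) := by
  have : partialBox J r = Set.univ.pi fun j => Set.Ioc 0 (if j ∈ J then r else 1) := by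
    ext x
    simp [partialBox]
  exact this ▸ MeasurableSet.univ_pi fun _ => measurableSet_Ioc

theorem partialBox_one : partialBox J 1 = unitBox κ := by
  ext x
  simp [partialBox, unitBox]

theorem partialBox_mono : Monotone (partialBox J) := fun r r' h x hx j =>
  ⟨(hx j).1, (hx j).2.trans (by split_ifs <;> simp [h])⟩

theorem measurableSet_dyadicShell [Countable κ] (n : ℕ) : MeasurableSet (dyadicShell J n) :=
  (measurableSet_partialBox J _).diff (measurableSet_partialBox J _)

theorem dyadicShell_subset_unitBox (n : ℕ) : dyadicShell J n ⊆ unitBox κ :=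
  partialBox_one J ▸
    Set.sdiff_subset.trans (partialBox_mono J (pow_le_one₀ (by norm_num) (by norm_num)))

theorem pairwise_disjoint_dyadicShell : Pairwise (Disjoint on dyadicShell J) := by
  have key : ∀ m n, m < n → Disjoint (dyadicShell J m) (dyadicShell J n) := fun m n hmn =>
    Set.disjoint_left.2 fun x hxm hxn =>
      hxm.2 (partialBox_mono J (pow_le_pow_of_le_one (by norm_num) (by norm_num) hmn) hxn.1)
  intro m n hmn
  rcases hmn.lt_or_gt with h | h
  exacts [key m n h, (key n m h).symm]

theorem iUnion_dyadicShell (hJ : J.Nonempty) : ⋃ n, dyadicShell J n = unitBox κ := by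
  refine (Set.iUnion_subset (dyadicShell_subset_unitBox J)).antisymm fun x hx => ?_
  obtain ⟨j₀, hj₀, hmax⟩ := Finset.exists_mem_eq_sup' hJ x
  obtain ⟨n, hlt, hle⟩ := exists_nat_pow_near_of_lt_one (hx j₀).1 (hx j₀).2
    (by norm_num : (0 : ℝ) < 2⁻¹) (by norm_num)
  refine Set.mem_iUnion.2 ⟨n, fun j => ⟨(hx j).1, ?_⟩, fun h => ?_⟩
  · split_ifs with hj
    · exact (hmax ▸ Finset.le_sup' x hj).trans hle
    · exact (hx j).2
  · have := (h j₀).2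
    rw [if_pos hj₀] at this
    linarith

theorem preimage_doubling_partialBox (r : ℝ) :
    (fun (x : κ → ℝ) j => (if j ∈ J then (2 : ℝ) else 1) * x j) ⁻¹' partialBox J r
      = partialBox J (r / 2) := by
  ext x
  simp only [Set.mem_preimage, partialBox, Set.mem_ofPred_eq, Set.mem_Ioc]
  refine forall_congr' fun j => ?_
  split_ifs
  · constructor <;> rintro ⟨h1, h2⟩ <;> constructor <;> linarith
  · simp

theorem preimage_doubling_dyadicShell (n : ℕ) :
    (fun (x : κ → ℝ) j => (if j ∈ J then (2 : ℝ) else 1) * x j) ⁻¹' dyadicShell J n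
      = dyadicShell J (n + 1) := by
  rw [dyadicShell, dyadicShell, Set.preimage_sdiff, preimage_doubling_partialBox,
    preimage_doubling_partialBox]
  simp only [pow_succ, div_eq_mul_inv]

theorem dyadicShell_zero_subset : dyadicShell J 0 ⊆ ⋃ j ∈ J, {x ∈ unitBox κ | 2⁻¹ < x j} := by
  intro x ⟨hx, hx'⟩
  have hxbox : x ∈ unitBox κ := partialBox_one J ▸ by simpa using hx
  simp only [partialBox, Set.mem_ofPred_eq, not_forall] at hx'
  obtain ⟨j, hj⟩ := hx'
  by_cases hjJ : j ∈ J
  · rw [if_pos hjJ, zero_add, pow_one] at hj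
    exact Set.mem_biUnion hjJ ⟨hxbox, lt_of_not_ge fun h => hj ⟨(hxbox j).1, h⟩⟩
  · exact absurd (by simpa [hjJ] using hxbox j) hj

theorem volume_dyadicShell_zero_pos [Fintype κ] (hJ : J.Nonempty) :
    0 < volume (dyadicShell J 0) := by
  have hcube : Set.univ.pi (fun _ => Set.Ioc (2⁻¹ : ℝ) 1) ⊆ dyadicShell J 0 := by
    intro x hx
    simp only [Set.mem_pi, Set.mem_univ, true_implies] at hx
    obtain ⟨j₀, hj₀⟩ := hJ
    refine ⟨fun j => ⟨by linarith [(hx j).1], by simpa using (hx j).2⟩, fun h => ?_⟩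
    have := (h j₀).2
    rw [if_pos hj₀] at this
    linarith [(hx j₀).1]
  refine lt_of_lt_of_le ?_ (measure_mono hcube)
  simpa [volume_pi_pi] using
    ENNReal.pow_pos (ENNReal.ofReal_pos.2 (by norm_num : (0 : ℝ) < 1 - 2⁻¹)) _

end Boxes

section Forms

variable {ι κ : Type*} (c : ι → κ → ℝ)

noncomputable def vanishingForms (I : Finset ι) (j : κ) : Finset ι := {i ∈ I | c i j = 0}

theorem vanishingForms_subset (I : Finset ι) (j : κ) : vanishingForms c I j ⊆ I :=
  Finset.filter_subset _ I

variable [Fintype κ]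

def linearForm (i : ι) (x : κ → ℝ) : ℝ := ∑ j, c i j * x j

noncomputable def formIntegrand (I : Finset ι) (s : ℝ) (x : κ → ℝ) : ℝ≥0∞ :=
  ENNReal.ofReal ((∏ i ∈ I, linearForm c i x) ^ (-s))

noncomputable def formIntegral (I : Finset ι) (s : ℝ) : ℝ≥0∞ :=
  ∫⁻ x in unitBox κ, formIntegrand c I s x

noncomputable def formSupport (I : Finset ι) : Finset κ := {j | ∃ i ∈ I, c i j ≠ 0}

def formBound (I : Finset ι) : ℝ := ∏ i ∈ I, (1 + ∑ j, c i j)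

noncomputable def shellIntegral [DecidableEq κ] (I : Finset ι) (s : ℝ) (n : ℕ) : ℝ≥0∞ :=
  ∫⁻ x in dyadicShell (formSupport c I) n, formIntegrand c I s x

variable {c} {I I' : Finset ι} {s : ℝ} {x : κ → ℝ}

theorem mul_le_linearForm (hc : ∀ i j, 0 ≤ c i j) (hx : ∀ j, 0 ≤ x j) (i : ι) (j : κ) :
    c i j * x j ≤ linearForm c i x :=
  Finset.single_le_sum (fun k _ => mul_nonneg (hc i k) (hx k)) (Finset.mem_univ j)

theorem linearForm_nonneg (hc : ∀ i j, 0 ≤ c i j) (hx : ∀ j, 0 ≤ x j) (i : ι) :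
    0 ≤ linearForm c i x :=
  Finset.sum_nonneg fun j _ => mul_nonneg (hc i j) (hx j)

theorem linearForm_pos (hc : ∀ i j, 0 ≤ c i j) (hrow : ∀ i, ∃ j, c i j ≠ 0)
    (hx : ∀ j, 0 < x j) (i : ι) : 0 < linearForm c i x := by
  obtain ⟨j, hj⟩ := hrow i
  exact (mul_pos ((hc i j).lt_of_ne' hj) (hx j)).trans_le
    (mul_le_linearForm hc (fun k => (hx k).le) i j)

theorem linearForm_update_of_eq_zero [DecidableEq κ] {i : ι} {j : κ} (h : c i j = 0) (t : ℝ) :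
    linearForm c i (update x j t) = linearForm c i x := by
  refine Finset.sum_congr rfl fun k _ => ?_
  by_cases hk : k = j
  · subst hk; simp [h]
  · simp [hk]

theorem prod_linearForm_pos (hc : ∀ i j, 0 ≤ c i j) (hrow : ∀ i, ∃ j, c i j ≠ 0)
    (hx : x ∈ unitBox κ) (I : Finset ι) : 0 < ∏ i ∈ I, linearForm c i x :=
  Finset.prod_pos fun i _ => linearForm_pos hc hrow (fun j => (hx j).1) i

theorem prod_linearForm_le_formBound (hc : ∀ i j, 0 ≤ c i j) (hx : x ∈ unitBox κ)
    (I : Finset ι) : ∏ i ∈ I, linearForm c i x ≤ formBound c I := by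
  refine Finset.prod_le_prod (fun i _ => linearForm_nonneg hc (fun j => (hx j).1.le) i)
    fun i _ => ?_
  have : linearForm c i x ≤ ∑ j, c i j :=
    Finset.sum_le_sum fun j _ => mul_le_of_le_one_right (hc i j) (hx j).2
  linarith

theorem formBound_pos (hc : ∀ i j, 0 ≤ c i j) (I : Finset ι) : 0 < formBound c I :=
  Finset.prod_pos fun i _ => by linarith [Finset.sum_nonneg fun j (_ : j ∈ Finset.univ) => hc i j]

theorem vanishingForms_ssubset {j : κ} (hj : j ∈ formSupport c I) : vanishingForms c I j ⊂ I := by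
  obtain ⟨i, hi, hij⟩ : ∃ i ∈ I, c i j ≠ 0 := by simpa [formSupport] using hj
  exact Finset.filter_ssubset.2 ⟨i, hi, hij⟩

theorem formSupport_nonempty (hrow : ∀ i, ∃ j, c i j ≠ 0) (hI : I.Nonempty) :
    (formSupport c I).Nonempty := by
  obtain ⟨i, hi⟩ := hI
  obtain ⟨j, hj⟩ := hrow i
  exact ⟨j, by simpa [formSupport] using ⟨i, hi, hj⟩⟩

theorem measurable_formIntegrand (I : Finset ι) (s : ℝ) : Measurable (formIntegrand c I s) := by
  unfold formIntegrand linearForm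
  fun_prop

theorem formIntegral_empty (s : ℝ) : formIntegral c ∅ s = 1 := by
  simp [formIntegral, formIntegrand, volume_unitBox]

theorem formIntegral_exponent_zero (I : Finset ι) : formIntegral c I 0 = 1 := by
  simp [formIntegral, formIntegrand, volume_unitBox]

theorem formIntegrand_eq_mul_sdiff [DecidableEq ι] (hc : ∀ i j, 0 ≤ c i j) (hx : x ∈ unitBox κ)
    (h : I' ⊆ I) :
    formIntegrand c I s x = formIntegrand c I' s x * formIntegrand c (I \ I') s x := by
  have hnonneg : ∀ I : Finset ι, 0 ≤ ∏ i ∈ I, linearForm c i x := fun I =>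
    Finset.prod_nonneg fun i _ => linearForm_nonneg hc (fun j => (hx j).1.le) i
  rw [formIntegrand, formIntegrand, formIntegrand, ← Finset.prod_sdiff h,
    Real.mul_rpow (hnonneg _) (hnonneg _), ENNReal.ofReal_mul (Real.rpow_nonneg (hnonneg _) _),
    mul_comm]

theorem formIntegrand_le_formBound_mul [DecidableEq ι] (hc : ∀ i j, 0 ≤ c i j)
    (hrow : ∀ i, ∃ j, c i j ≠ 0) (hs : 0 ≤ s) (hx : x ∈ unitBox κ) (h : I' ⊆ I) :
    formIntegrand c I' s x ≤ ENNReal.ofReal (formBound c (I \ I') ^ s) * formIntegrand c I s x := by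
  set p := ∏ i ∈ I \ I', linearForm c i x
  have hp : 0 < p := prod_linearForm_pos hc hrow hx _
  rw [formIntegrand_eq_mul_sdiff hc hx h, mul_left_comm]
  refine le_mul_of_one_le_right' ?_
  rw [formIntegrand, ← ENNReal.ofReal_mul (Real.rpow_nonneg (formBound_pos hc _).le _),
    ENNReal.one_le_ofReal]
  calc 1 = p ^ s * p ^ (-s) := by rw [← Real.rpow_add hp]; simp
    _ ≤ formBound c (I \ I') ^ s * p ^ (-s) := by
      gcongr
      exact prod_linearForm_le_formBound hc hx _

theorem formIntegrand_le_of_half_lt [DecidableEq ι] (hc : ∀ i j, 0 ≤ c i j) (hs : 0 ≤ s)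
    (hx : x ∈ unitBox κ) {j : κ} (hxj : 2⁻¹ < x j) :
    formIntegrand c I s x ≤ ENNReal.ofReal ((∏ i ∈ I \ vanishingForms c I j, c i j / 2) ^ (-s)) *
      formIntegrand c (vanishingForms c I j) s x := by
  have hpos : ∀ i ∈ I \ vanishingForms c I j, 0 < c i j / 2 := fun i hi => by
    obtain ⟨hiI, hij⟩ := Finset.mem_sdiff.1 hi
    have : c i j ≠ 0 := fun h => hij (Finset.mem_filter.2 ⟨hiI, h⟩)
    linarith [(hc i j).lt_of_ne' this]
  have hle : ∀ i ∈ I \ vanishingForms c I j, c i j / 2 ≤ linearForm c i x := fun i _ => by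
    nlinarith [hc i j, mul_le_linearForm hc (fun k => (hx k).1.le) i j]
  rw [formIntegrand_eq_mul_sdiff hc hx (vanishingForms_subset c I j), mul_comm]
  gcongr
  exact ENNReal.ofReal_le_ofReal <| Real.rpow_le_rpow_of_nonpos (Finset.prod_pos hpos)
    (Finset.prod_le_prod (fun i hi => (hpos i hi).le) hle) (neg_nonpos.2 hs)

theorem formIntegrand_update_vanishingForms [DecidableEq κ] (I : Finset ι) (s : ℝ) (j : κ)
    (x : κ → ℝ) (t : ℝ) :
    formIntegrand c (vanishingForms c I j) s (update x j t)
      = formIntegrand c (vanishingForms c I j) s x := by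
  unfold formIntegrand
  congr 2
  exact Finset.prod_congr rfl fun i hi =>
    linearForm_update_of_eq_zero (Finset.mem_filter.1 hi).2 t

theorem formIntegral_vanishingForms_le [DecidableEq ι] (hc : ∀ i j, 0 ≤ c i j)
    (hrow : ∀ i, ∃ j, c i j ≠ 0) (hs : 0 ≤ s) (I : Finset ι) (j : κ) :
    formIntegral c (vanishingForms c I j) s
      ≤ 2 * ENNReal.ofReal (formBound c (I \ vanishingForms c I j) ^ s) * formIntegral c I s := by
  classical
  rw [formIntegral, lintegral_unitBox_eq_two_mul_upperHalf (measurable_formIntegrand _ _) j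
    (formIntegrand_update_vanishingForms I s j), mul_assoc]
  gcongr
  calc ∫⁻ x in {x ∈ unitBox κ | 2⁻¹ < x j}, formIntegrand c (vanishingForms c I j) s x
      ≤ ∫⁻ x in {x ∈ unitBox κ | 2⁻¹ < x j},
          ENNReal.ofReal (formBound c (I \ vanishingForms c I j) ^ s) * formIntegrand c I s x :=
        setLIntegral_mono ((measurable_formIntegrand I s).const_mul _) fun x hx =>
          formIntegrand_le_formBound_mul hc hrow hs hx.1 (vanishingForms_subset c I j)
    _ ≤ _ := by
        rw [lintegral_const_mul _ (measurable_formIntegrand I s)]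
        exact mul_le_mul_right (lintegral_mono_set (Set.sep_subset _ _)) _

theorem formIntegrand_doubling [DecidableEq κ] (hc : ∀ i j, 0 ≤ c i j) (hx : ∀ j, 0 ≤ x j) :
    formIntegrand c I s (fun j => (if j ∈ formSupport c I then 2 else 1) * x j)
      = ENNReal.ofReal (2 ^ (-(s * I.card))) * formIntegrand c I s x := by
  have hform : ∀ i ∈ I, linearForm c i (fun j => (if j ∈ formSupport c I then 2 else 1) * x j)
      = 2 * linearForm c i x := by
    intro i hi
    rw [linearForm, linearForm, Finset.mul_sum]
    refine Finset.sum_congr rfl fun j _ => ?_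
    split_ifs with hj
    · ring
    · have : c i j = 0 := by
        by_contra h
        exact hj (by simpa [formSupport] using ⟨i, hi, h⟩)
      simp [this]
  have hp : 0 ≤ ∏ i ∈ I, linearForm c i x :=
    Finset.prod_nonneg fun i _ => linearForm_nonneg hc hx i
  rw [formIntegrand, formIntegrand, Finset.prod_congr rfl hform, Finset.prod_mul_distrib,
    Finset.prod_const, Real.mul_rpow (by positivity) hp, ENNReal.ofReal_mul (by positivity),
    ← Real.rpow_natCast, ← Real.rpow_mul zero_le_two, mul_neg, mul_comm (I.card : ℝ)]

theorem shellIntegral_succ [DecidableEq κ] (hc : ∀ i j, 0 ≤ c i j) (I : Finset ι) (s : ℝ) (n : ℕ) :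
    shellIntegral c I s (n + 1)
      = ENNReal.ofReal (2 ^ (s * I.card - (formSupport c I).card)) * shellIntegral c I s n := by
  set J := formSupport c I
  -- doubling `x_J` maps shell `n + 1` onto shell `n`, with Jacobian `2^|J|`, and multiplies the
  -- integrand by `2^{-s|I|}`
  have hσ : ∀ j, 0 < (if j ∈ J then (2 : ℝ) else 1) := fun j => by split_ifs <;> norm_num
  have h := setLIntegral_comp_diag_affine _ 0 hσ (measurable_formIntegrand (c := c) I s)
    (measurableSet_dyadicShell J n)
  simp only [Pi.zero_apply, add_zero, preimage_doubling_dyadicShell] at h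
  rw [setLIntegral_congr_fun (measurableSet_dyadicShell J (n + 1)) fun x hx =>
      formIntegrand_doubling hc fun j => (dyadicShell_subset_unitBox J _ hx j).1.le,
    lintegral_const_mul _ (measurable_formIntegrand I s), Finset.prod_ite_mem,
    Finset.univ_inter, Finset.prod_const, ← Real.rpow_natCast] at h
  rw [shellIntegral, shellIntegral, h, ← mul_assoc, ← mul_assoc,
    ← ENNReal.ofReal_mul (by positivity), ← ENNReal.ofReal_mul (by positivity),
    ← Real.rpow_add zero_lt_two, ← Real.rpow_add zero_lt_two,
    show s * I.card - J.card + J.card + -(s * I.card) = 0 by ring, Real.rpow_zero,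
    ENNReal.ofReal_one, one_mul]

theorem shellIntegral_eq_pow_mul [DecidableEq κ] (hc : ∀ i j, 0 ≤ c i j) (I : Finset ι) (s : ℝ)
    (n : ℕ) : shellIntegral c I s n
      = ENNReal.ofReal (2 ^ (s * I.card - (formSupport c I).card)) ^ n * shellIntegral c I s 0 := by
  induction n with
  | zero => simp
  | succ n ih => rw [shellIntegral_succ hc, ih, pow_succ, mul_assoc, mul_left_comm]

theorem formIntegral_eq_tsum_mul [DecidableEq κ] (hc : ∀ i j, 0 ≤ c i j)
    (hrow : ∀ i, ∃ j, c i j ≠ 0) (hI : I.Nonempty) (s : ℝ) :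
    formIntegral c I s = (∑' n : ℕ, ENNReal.ofReal (2 ^ (s * I.card - (formSupport c I).card)) ^ n)
      * shellIntegral c I s 0 := by
  rw [formIntegral, ← iUnion_dyadicShell _ (formSupport_nonempty hrow hI),
    lintegral_iUnion (measurableSet_dyadicShell _) (pairwise_disjoint_dyadicShell _),
    ← ENNReal.tsum_mul_right]
  exact tsum_congr (shellIntegral_eq_pow_mul hc I s)

theorem shellIntegral_zero_pos [DecidableEq κ] (hc : ∀ i j, 0 ≤ c i j)
    (hrow : ∀ i, ∃ j, c i j ≠ 0) (hI : I.Nonempty) (s : ℝ) : 0 < shellIntegral c I s 0 := by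
  rw [shellIntegral, setLIntegral_pos_iff (measurable_formIntegrand I s)]
  refine (volume_dyadicShell_zero_pos _ (formSupport_nonempty hrow hI)).trans_le
    (measure_mono fun x hx => ⟨?_, hx⟩)
  exact (ENNReal.ofReal_pos.2 (Real.rpow_pos_of_pos
    (prod_linearForm_pos hc hrow (dyadicShell_subset_unitBox _ 0 hx) I) _)).ne'

theorem shellIntegral_zero_le [DecidableEq ι] [DecidableEq κ] (hc : ∀ i j, 0 ≤ c i j)
    (hs : 0 ≤ s) (I : Finset ι) :
    shellIntegral c I s 0 ≤ ∑ j ∈ formSupport c I,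
      ENNReal.ofReal ((∏ i ∈ I \ vanishingForms c I j, c i j / 2) ^ (-s)) *
        formIntegral c (vanishingForms c I j) s := by
  refine (lintegral_mono_set (dyadicShell_zero_subset _)).trans
    ((lintegral_biUnion_finset_le _ _ _).trans (Finset.sum_le_sum fun j _ => ?_))
  calc ∫⁻ x in {x ∈ unitBox κ | 2⁻¹ < x j}, formIntegrand c I s x
      ≤ ∫⁻ x in {x ∈ unitBox κ | 2⁻¹ < x j},
          ENNReal.ofReal ((∏ i ∈ I \ vanishingForms c I j, c i j / 2) ^ (-s)) *
            formIntegrand c (vanishingForms c I j) s x :=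
        setLIntegral_mono ((measurable_formIntegrand _ s).const_mul _) fun x hx =>
          formIntegrand_le_of_half_lt hc hs hx.1 hx.2
    _ ≤ _ := by
        rw [lintegral_const_mul _ (measurable_formIntegrand _ s)]
        exact mul_le_mul_right (lintegral_mono_set (Set.sep_subset _ _)) _

theorem formIntegral_lt_top_iff_shell [DecidableEq κ] (hc : ∀ i j, 0 ≤ c i j)
    (hrow : ∀ i, ∃ j, c i j ≠ 0) (hI : I.Nonempty) (s : ℝ) :
    formIntegral c I s < ⊤ ↔
      s * I.card < (formSupport c I).card ∧ shellIntegral c I s 0 < ⊤ := by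
  have hratio : ENNReal.ofReal (2 ^ (s * I.card - (formSupport c I).card)) < 1 ↔
      s * I.card < (formSupport c I).card := by
    rw [ENNReal.ofReal_lt_one, Real.rpow_lt_one_iff_of_pos two_pos]
    norm_num
  have hinv : (1 - ENNReal.ofReal (2 ^ (s * I.card - (formSupport c I).card)))⁻¹ ≠ 0 :=
    ENNReal.inv_ne_zero.2 (ENNReal.sub_ne_top ENNReal.one_ne_top)
  rw [formIntegral_eq_tsum_mul hc hrow hI, ENNReal.tsum_geometric, ENNReal.mul_lt_top_iff,
    ENNReal.inv_lt_top, tsub_pos_iff_lt, hratio]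
  simp [hinv, (shellIntegral_zero_pos hc hrow hI s).ne']

theorem formIntegral_lt_top_iff (hc : ∀ i j, 0 ≤ c i j) (hrow : ∀ i, ∃ j, c i j ≠ 0)
    (hI : I.Nonempty) (hs : 0 ≤ s) :
    formIntegral c I s < ⊤ ↔ s * I.card < (formSupport c I).card ∧
      ∀ j ∈ formSupport c I, formIntegral c (vanishingForms c I j) s < ⊤ := by
  classical
  refine ⟨fun hF => ⟨((formIntegral_lt_top_iff_shell hc hrow hI s).1 hF).1, fun j _ => ?_⟩,
    fun h => (formIntegral_lt_top_iff_shell hc hrow hI s).2 ⟨h.1, ?_⟩⟩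
  · exact (formIntegral_vanishingForms_le hc hrow hs I j).trans_lt
      (ENNReal.mul_lt_top (ENNReal.mul_lt_top ENNReal.ofNat_lt_top ENNReal.ofReal_lt_top) hF)
  · exact (shellIntegral_zero_le hc hs I).trans_lt
      (ENNReal.sum_lt_top.2 fun j hj => ENNReal.mul_lt_top ENNReal.ofReal_lt_top (h.2 j hj))

theorem eventually_formIntegral_lt_top (hc : ∀ i j, 0 ≤ c i j) (hrow : ∀ i, ∃ j, c i j ≠ 0)
    (I : Finset ι) (hs : 0 ≤ s) (hF : formIntegral c I s < ⊤) :
    ∀ᶠ t in 𝓝[>] s, formIntegral c I t < ⊤ := by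
  induction I using Finset.strongInduction generalizing s with
  | H I ih =>
  rcases I.eq_empty_or_nonempty with rfl | hI
  · simp [formIntegral_empty]
  obtain ⟨hexp, hvan⟩ := (formIntegral_lt_top_iff hc hrow hI hs).1 hF
  have hexp' : ∀ᶠ t : ℝ in 𝓝[>] s, t * I.card < (formSupport c I).card :=
    nhdsWithin_le_nhds <| (continuous_id.mul continuous_const).continuousAt.eventually_lt
      continuousAt_const hexp
  have hvan' : ∀ j ∈ formSupport c I, ∀ᶠ t in 𝓝[>] s, formIntegral c (vanishingForms c I j) t < ⊤ :=
    fun j hj => ih _ (vanishingForms_ssubset hj) hs (hvan j hj)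
  filter_upwards [self_mem_nhdsWithin, hexp', (Filter.eventually_all_finset _).2 hvan']
    with t hst ht hvt
  exact (formIntegral_lt_top_iff hc hrow hI (hs.trans hst.le)).2 ⟨ht, hvt⟩

end Forms

theorem stmt_6_general (d e : ℕ) (c : Fin d → Fin e → ℝ)
    (hc : ∀ i j, 0 ≤ c i j) (hrow : ∀ i, ∃ j, c i j ≠ 0)
    (sHat : ℝ)
    (hsHat : sHat = sSup {t : ℝ | 0 < t ∧
        (∫⁻ x in {x : Fin e → ℝ | ∀ j, x j ∈ Set.Ioc (0:ℝ) 1},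
          ENNReal.ofReal ((∏ i, ∑ j, c i j * x j) ^ (-t)) ∂volume) < ⊤})
    (hbdd : BddAbove {t : ℝ | 0 < t ∧
        (∫⁻ x in {x : Fin e → ℝ | ∀ j, x j ∈ Set.Ioc (0:ℝ) 1},
          ENNReal.ofReal ((∏ i, ∑ j, c i j * x j) ^ (-t)) ∂volume) < ⊤}) :
    (∫⁻ x in {x : Fin e → ℝ | ∀ j, x j ∈ Set.Ioc (0:ℝ) 1},
      ENNReal.ofReal ((∏ i, ∑ j, c i j * x j) ^ (-sHat)) ∂volume) = ⊤ := by
  set S := {t : ℝ | 0 < t ∧ formIntegral c Finset.univ t < ⊤}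
  have hexceed : ∀ s, 0 ≤ s → formIntegral c Finset.univ s < ⊤ → ∃ t ∈ S, s < t := fun s hs hF =>
    ((eventually_formIntegral_lt_top hc hrow _ hs hF).and self_mem_nhdsWithin).exists.imp
      fun t ht => ⟨⟨hs.trans_lt ht.2, ht.1⟩, ht.2⟩
  obtain ⟨t₀, ht₀, -⟩ :=
    hexceed 0 le_rfl (by rw [formIntegral_exponent_zero]; exact ENNReal.one_lt_top)
  have hpos : 0 < sHat := hsHat ▸ ht₀.1.trans_le (le_csSup hbdd ht₀)
  by_contra hne
  obtain ⟨t, ht, hlt⟩ := hexceed sHat hpos.le (lt_top_iff_ne_top.2 hne)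
  exact (hsHat ▸ le_csSup hbdd ht).not_gt hlt

/-- At the integrability index `ŝ(P)` itself, the integral `∫_{(0,1]^e} P^{-ŝ(P)}` diverges. -/
theorem stmt_6 (d e : ℕ) (he : 0 < e) (c : Fin d → Fin e → ℝ)
    (hc : ∀ i j, 0 ≤ c i j) (hrow : ∀ i, ∃ j, c i j ≠ 0)
    (sHat : ℝ)
    (hsHat : sHat = sSup {t : ℝ | 0 < t ∧
        (∫⁻ x in {x : Fin e → ℝ | ∀ j, x j ∈ Set.Ioc (0:ℝ) 1},
          ENNReal.ofReal ((∏ i, ∑ j, c i j * x j) ^ (-t)) ∂volume) < ⊤})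
    (hbdd : BddAbove {t : ℝ | 0 < t ∧
        (∫⁻ x in {x : Fin e → ℝ | ∀ j, x j ∈ Set.Ioc (0:ℝ) 1},
          ENNReal.ofReal ((∏ i, ∑ j, c i j * x j) ^ (-t)) ∂volume) < ⊤}) :
    (∫⁻ x in {x : Fin e → ℝ | ∀ j, x j ∈ Set.Ioc (0:ℝ) 1},
      ENNReal.ofReal ((∏ i, ∑ j, c i j * x j) ^ (-sHat)) ∂volume) = ⊤ :=
  stmt_6_general d e c hc hrow sHat hsHat hbdd
end

section
/- For every even positive integer L, let ℓ = L/2, S_ℓ = Σ_{a+b+c=ℓ, a,b,c>0} 1/((a+b)(b+c)) and T_ℓ = Σ_{a+b=ℓ, a,b>0} 1/(ab); then (1/4)·S_ℓ + (1/4)·T_ℓ = (1/4)·Σ_{k=1}^{ℓ-1} 1/k². -/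
open Finset

noncomputable def Qsum (l : ℕ) : ℝ :=
  ∑ p ∈ (Finset.Ico 1 l ×ˢ Finset.Ico 1 l).filter (fun p => l ≤ p.1 + p.2),
    (1 : ℝ) / ((p.1 : ℝ) * (p.2 : ℝ))

lemma reflect (n : ℕ) :
    ∑ k ∈ Finset.Ico 1 n, (1 : ℝ) / ((n : ℝ) - (k : ℝ)) =
    ∑ k ∈ Finset.Ico 1 n, (1 : ℝ) / (k : ℝ) := by
  apply Finset.sum_nbij' (fun k => n - k) (fun k => n - k)
  · intro a ha
    simp only [Finset.mem_Ico] at *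
    omega
  · intro a ha
    simp only [Finset.mem_Ico] at *
    omega
  · intro a ha; simp only [Finset.mem_Ico] at ha; omega
  · intro a ha; simp only [Finset.mem_Ico] at ha; omega
  · intro a ha
    simp only [Finset.mem_Ico] at ha
    have : ((n - a : ℕ) : ℝ) = (n : ℝ) - a := by
      push_cast [Nat.cast_sub ha.2.le]; ring
    rw [this]

lemma dsum (n : ℕ) (hn : 1 ≤ n) :
    ∑ k ∈ Finset.Ico 1 n, (1 : ℝ) / ((k : ℝ) * ((n - k : ℕ) : ℝ)) =
    (2 / (n : ℝ)) * ∑ k ∈ Finset.Ico 1 n, (1 : ℝ) / (k : ℝ) := by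
  have hn0 : (n : ℝ) ≠ 0 := by exact_mod_cast Nat.one_le_iff_ne_zero.mp hn
  have step : ∀ k ∈ Finset.Ico 1 n,
      (1 : ℝ) / ((k : ℝ) * ((n - k : ℕ) : ℝ)) =
      (1 / n) * (1 / (k : ℝ)) + (1 / n) * (1 / ((n : ℝ) - k)) := by
    intro k hk
    simp only [Finset.mem_Ico] at hk
    have h1 : ((n - k : ℕ) : ℝ) = (n : ℝ) - k := by
      push_cast [Nat.cast_sub hk.2.le]; ring
    have hk0 : (k : ℝ) ≠ 0 := by exact_mod_cast Nat.one_le_iff_ne_zero.mp hk.1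
    have hnk : (n : ℝ) - k ≠ 0 := by
      have : (k : ℝ) < n := by exact_mod_cast hk.2
      linarith
    rw [h1]
    field_simp
    ring
  rw [Finset.sum_congr rfl step, Finset.sum_add_distrib, ← Finset.mul_sum, ← Finset.mul_sum,
    reflect]
  ring

lemma qsum_eq (l : ℕ) : Qsum l = ∑ k ∈ Finset.Ico 1 l, (1 : ℝ) / (k : ℝ) ^ 2 := by
  induction l with
  | zero => simp [Qsum]
  | succ n ih =>
    rcases Nat.eq_zero_or_pos n with h0 | hn
    · subst h0; simp [Qsum]
    have hn0 : (n : ℝ) ≠ 0 := by exact_mod_cast Nat.one_le_iff_ne_zero.mp hn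
    have hins : Finset.Ico 1 (n+1) = insert n (Finset.Ico 1 n) :=
      Nat.Ico_succ_right_eq_insert_Ico hn
    have hnot : n ∉ Finset.Ico 1 n := by simp
    rw [Finset.sum_Ico_succ_top hn, ← ih]
    -- expand Qsum (n+1)
    have hsplit : ∀ (i j : ℕ) (x : ℝ),
        (if n ≤ i + j then x else 0)
          = (if n + 1 ≤ i + j then x else 0) + (if i + j = n then x else 0) := by
      intro i j x
      split_ifs <;> first | ring1 | (exfalso; omega)
    have key : ∀ i ∈ Finset.Ico 1 n,
        (∑ j ∈ Finset.Ico 1 n, if i + j = n then (1:ℝ)/((i:ℝ)*(j:ℝ)) else 0)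
          = 1 / ((i : ℝ) * ((n - i : ℕ) : ℝ)) := by
      intro i hi
      simp only [Finset.mem_Ico] at hi
      rw [Finset.sum_eq_single (n - i)]
      · rw [if_pos (by omega)]
      · intro j hj hne
        simp only [Finset.mem_Ico] at hj
        rw [if_neg (by omega)]
      · intro h
        exfalso; apply h; simp only [Finset.mem_Ico]; omega
    have hQn : Qsum n
        = (∑ i ∈ Finset.Ico 1 n, ∑ j ∈ Finset.Ico 1 n,
            if n + 1 ≤ i + j then (1:ℝ)/((i:ℝ)*(j:ℝ)) else 0)
          + ∑ k ∈ Finset.Ico 1 n, (1 : ℝ) / ((k : ℝ) * ((n - k : ℕ) : ℝ)) := by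
      rw [Qsum, Finset.sum_filter, Finset.sum_product]
      simp only [hsplit]
      rw [Finset.sum_congr rfl (fun i hi => Finset.sum_add_distrib),
        Finset.sum_add_distrib]
      congr 1
      exact Finset.sum_congr rfl key
    have hQn1 : Qsum (n+1)
        = (∑ i ∈ Finset.Ico 1 n, ∑ j ∈ Finset.Ico 1 n,
            if n + 1 ≤ i + j then (1:ℝ)/((i:ℝ)*(j:ℝ)) else 0)
          + (1/((n:ℝ)*(n:ℝ)) + ∑ j ∈ Finset.Ico 1 n, (1:ℝ)/((n:ℝ)*(j:ℝ)))
          + ∑ i ∈ Finset.Ico 1 n, (1:ℝ)/((i:ℝ)*(n:ℝ)) := by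
      rw [Qsum, Finset.sum_filter, Finset.sum_product, hins, Finset.sum_insert hnot]
      simp only [Finset.sum_insert hnot]
      rw [if_pos (by omega : n + 1 ≤ n + n)]
      have e2 : ∀ j ∈ Finset.Ico 1 n,
          (if n + 1 ≤ n + j then (1:ℝ)/((n:ℝ)*(j:ℝ)) else 0) = (1:ℝ)/((n:ℝ)*(j:ℝ)) := by
        intro j hj; simp only [Finset.mem_Ico] at hj; exact if_pos (by omega)
      have e3 : ∀ i ∈ Finset.Ico 1 n,
          ((if n + 1 ≤ i + n then (1:ℝ)/((i:ℝ)*(n:ℝ)) else 0)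
            + ∑ j ∈ Finset.Ico 1 n, if n + 1 ≤ i + j then (1:ℝ)/((i:ℝ)*(j:ℝ)) else 0)
          = (1:ℝ)/((i:ℝ)*(n:ℝ))
            + ∑ j ∈ Finset.Ico 1 n, (if n + 1 ≤ i + j then (1:ℝ)/((i:ℝ)*(j:ℝ)) else 0) := by
        intro i hi; simp only [Finset.mem_Ico] at hi
        rw [if_pos (by omega)]
      rw [Finset.sum_congr rfl e2, Finset.sum_congr rfl e3, Finset.sum_add_distrib]
      ring
    have hmulj : ∑ j ∈ Finset.Ico 1 n, (1:ℝ)/((n:ℝ)*(j:ℝ))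
        = (1/(n:ℝ)) * ∑ j ∈ Finset.Ico 1 n, (1:ℝ)/(j:ℝ) := by
      rw [Finset.mul_sum]
      exact Finset.sum_congr rfl (fun j hj => by rw [div_mul_div_comm, one_mul])
    have hmuli : ∑ i ∈ Finset.Ico 1 n, (1:ℝ)/((i:ℝ)*(n:ℝ))
        = (1/(n:ℝ)) * ∑ i ∈ Finset.Ico 1 n, (1:ℝ)/(i:ℝ) := by
      rw [Finset.mul_sum]
      exact Finset.sum_congr rfl (fun i hi => by
        rw [div_mul_div_comm, one_mul, mul_comm])
    rw [hQn1, hQn, dsum n hn, hmulj, hmuli]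
    have : (1:ℝ)/((n:ℝ)*(n:ℝ)) = 1/(n:ℝ)^2 := by ring
    rw [this]
    ring

/-- `S_ℓ + T_ℓ = Σ_{k=1}^{ℓ-1} 1/k²`, where
`S_ℓ = Σ_{a+b+c=ℓ, a,b,c>0} 1/((a+b)(b+c))` and `T_ℓ = Σ_{a+b=ℓ, a,b>0} 1/(ab)`. -/
theorem stmt_12 (l : ℕ) (hl : 1 ≤ l) :
    (∑ x ∈ (Finset.Icc 1 l ×ˢ Finset.Icc 1 l ×ˢ Finset.Icc 1 l).filter
        (fun x => x.1 + x.2.1 + x.2.2 = l),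
        (1 : ℝ) / (((x.1 + x.2.1 : ℕ) : ℝ) * ((x.2.1 + x.2.2 : ℕ) : ℝ)))
    + (∑ k ∈ Finset.Ico 1 l, (1 : ℝ) / ((k : ℝ) * ((l - k : ℕ) : ℝ)))
    = ∑ k ∈ Finset.Ico 1 l, (1 : ℝ) / (k : ℝ) ^ 2 := by
  rw [← qsum_eq]
  have hS : (∑ x ∈ (Finset.Icc 1 l ×ˢ Finset.Icc 1 l ×ˢ Finset.Icc 1 l).filter
        (fun x => x.1 + x.2.1 + x.2.2 = l),
        (1 : ℝ) / (((x.1 + x.2.1 : ℕ) : ℝ) * ((x.2.1 + x.2.2 : ℕ) : ℝ)))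
      = ∑ p ∈ (Finset.Ico 1 l ×ˢ Finset.Ico 1 l).filter (fun p => l + 1 ≤ p.1 + p.2),
        (1 : ℝ) / ((p.1 : ℝ) * (p.2 : ℝ)) := by
    apply Finset.sum_nbij' (fun x => (x.1 + x.2.1, x.2.1 + x.2.2))
      (fun p => (l - p.2, (p.1 + p.2 - l, l - p.1)))
    · intro x hx
      simp only [Finset.mem_filter, Finset.mem_product, Finset.mem_Icc, Finset.mem_Ico] at *
      omega
    · intro p hp
      simp only [Finset.mem_filter, Finset.mem_product, Finset.mem_Icc, Finset.mem_Ico] at *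
      omega
    · intro x hx
      simp only [Finset.mem_filter, Finset.mem_product, Finset.mem_Icc] at hx
      simp only [Prod.ext_iff]
      omega
    · intro p hp
      simp only [Finset.mem_filter, Finset.mem_product, Finset.mem_Ico] at hp
      simp only [Prod.ext_iff]
      omega
    · intro x hx
      rfl
  have hT : (∑ k ∈ Finset.Ico 1 l, (1 : ℝ) / ((k : ℝ) * ((l - k : ℕ) : ℝ)))
      = ∑ p ∈ (Finset.Ico 1 l ×ˢ Finset.Ico 1 l).filter (fun p => p.1 + p.2 = l),
        (1 : ℝ) / ((p.1 : ℝ) * (p.2 : ℝ)) := by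
    apply Finset.sum_nbij' (fun k => (k, l - k)) (fun p => p.1)
    · intro k hk
      simp only [Finset.mem_filter, Finset.mem_product, Finset.mem_Ico] at *
      omega
    · intro p hp
      simp only [Finset.mem_filter, Finset.mem_product, Finset.mem_Ico] at *
      omega
    · intro k hk; rfl
    · intro p hp
      simp only [Finset.mem_filter, Finset.mem_product, Finset.mem_Ico] at hp
      simp only [Prod.ext_iff]
      refine ⟨trivial, ?_⟩
      omega
    · intro k hk; rfl
  rw [hS, hT, Qsum]
  have hset : (Finset.Ico 1 l ×ˢ Finset.Ico 1 l).filter (fun p => l ≤ p.1 + p.2)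
      = (Finset.Ico 1 l ×ˢ Finset.Ico 1 l).filter (fun p => l + 1 ≤ p.1 + p.2)
        ∪ (Finset.Ico 1 l ×ˢ Finset.Ico 1 l).filter (fun p => p.1 + p.2 = l) := by
    rw [← Finset.filter_or]
    apply Finset.filter_congr
    intro p hp
    omega
  have hdisj : Disjoint
      ((Finset.Ico 1 l ×ˢ Finset.Ico 1 l).filter (fun p => l + 1 ≤ p.1 + p.2))
      ((Finset.Ico 1 l ×ˢ Finset.Ico 1 l).filter (fun p => p.1 + p.2 = l)) := by
    rw [Finset.disjoint_left]
    intro p hp1 hp2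
    simp only [Finset.mem_filter] at *
    omega
  rw [hset, Finset.sum_union hdisj]
end

section
/- For 0 ≤ z < 1, Σ_{a,b,c ≥ 1} z^{a+b+c}/((a+b)(b+c)) = z·Li₂(z)/(1-z) - (log(1-z))², where Li₂(z) = Σ_{k≥1} z^k/k². -/
open Real

namespace Stmt17Aux

variable {z : ℝ}

/-- `f z m = z^(m+1)/(m+1)`, the log series term. -/
noncomputable def f (z : ℝ) (m : ℕ) : ℝ := z ^ (m + 1) / ((m : ℝ) + 1)

/-- `T z b = Σ_{n≥0} f z (n+b)`, the tail of the log series. -/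
noncomputable def T (z : ℝ) (b : ℕ) : ℝ := ∑' n : ℕ, f z (n + b)

lemma f_nonneg (h0 : 0 ≤ z) (m : ℕ) : 0 ≤ f z m := by
  unfold f; positivity

lemma f_le (h0 : 0 ≤ z) (m : ℕ) : f z m ≤ z ^ (m + 1) := by
  unfold f
  apply div_le_self (by positivity)
  have : (0:ℝ) ≤ (m:ℝ) := Nat.cast_nonneg m
  linarith

lemma summable_geom_shift (h0 : 0 ≤ z) (h1 : z < 1) (k : ℕ) :
    Summable (fun n : ℕ => z ^ (n + k)) := by
  simpa [pow_add] using (summable_geometric_of_lt_one h0 h1).mul_right (z ^ k)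

lemma tsum_geom_shift (h0 : 0 ≤ z) (h1 : z < 1) (k : ℕ) :
    ∑' n : ℕ, z ^ (n + k) = z ^ k / (1 - z) := by
  simp only [pow_add]
  rw [tsum_mul_right, tsum_geometric_of_lt_one h0 h1]
  rw [div_eq_mul_inv, mul_comm]

lemma summable_f (h0 : 0 ≤ z) (h1 : z < 1) : Summable (f z) :=
  Summable.of_nonneg_of_le (f_nonneg h0) (f_le h0)
    (by simpa using summable_geom_shift h0 h1 1)

lemma summable_f_shift (h0 : 0 ≤ z) (h1 : z < 1) (b : ℕ) :
    Summable (fun n : ℕ => f z (n + b)) :=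
  (summable_nat_add_iff b).2 (summable_f h0 h1)

lemma T_nonneg (h0 : 0 ≤ z) (b : ℕ) : 0 ≤ T z b :=
  tsum_nonneg fun n => f_nonneg h0 _

lemma T_le (h0 : 0 ≤ z) (h1 : z < 1) (b : ℕ) : T z b ≤ z ^ (b + 1) / (1 - z) := by
  have h := Summable.tsum_le_tsum (fun n : ℕ => f_le h0 (n + b))
    (summable_f_shift h0 h1 b) (by simpa [← add_assoc] using summable_geom_shift h0 h1 (b+1))
  calc T z b ≤ ∑' n : ℕ, z ^ (n + b + 1) := h
    _ = ∑' n : ℕ, z ^ (n + (b + 1)) := by simp [← add_assoc]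
    _ = z ^ (b + 1) / (1 - z) := tsum_geom_shift h0 h1 (b+1)

lemma T_rec (h0 : 0 ≤ z) (h1 : z < 1) (b : ℕ) : T z b = f z b + T z (b + 1) := by
  have h := Summable.tsum_eq_zero_add (summable_f_shift h0 h1 b)
  unfold T
  rw [h]
  congr 1
  · simp
  · exact tsum_congr fun n => by rw [show n + 1 + b = n + (b + 1) by omega]

lemma T_zero (h0 : 0 ≤ z) (h1 : z < 1) : T z 0 = -Real.log (1 - z) := by
  have h := (hasSum_pow_div_log_of_abs_lt_one
    (by rwa [abs_of_nonneg h0] : |z| < 1)).tsum_eq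
  unfold T f
  simpa using h

end Stmt17Aux

namespace Stmt17Aux

variable {z : ℝ}

/-- Dilogarithm as an ℕ-indexed series. -/
noncomputable def Li (z : ℝ) : ℝ := ∑' n : ℕ, z ^ (n + 1) / ((n : ℝ) + 1) ^ 2

lemma summable_Li (h0 : 0 ≤ z) (h1 : z < 1) :
    Summable (fun n : ℕ => z ^ (n + 1) / ((n : ℝ) + 1) ^ 2) := by
  apply Summable.of_nonneg_of_le (fun n => by positivity)
    (fun n => ?_) (summable_geom_shift h0 h1 1)
  apply div_le_self (by positivity)
  have : (0:ℝ) ≤ (n:ℝ) := Nat.cast_nonneg n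
  nlinarith

/-- `F z (b,a) = f z (a+b+1) / (b+1)`; summing over `a` then `b` gives `A1`. -/
noncomputable def F (z : ℝ) (p : ℕ × ℕ) : ℝ := f z (p.2 + p.1 + 1) / ((p.1 : ℝ) + 1)

lemma F_nonneg (h0 : 0 ≤ z) (p : ℕ × ℕ) : 0 ≤ F z p := by
  unfold F
  have := f_nonneg h0 (p.2 + p.1 + 1)
  positivity

lemma F_le (h0 : 0 ≤ z) (p : ℕ × ℕ) : F z p ≤ z ^ (p.1 + 1) * z ^ (p.2 + 1) := by
  unfold F
  calc f z (p.2 + p.1 + 1) / ((p.1 : ℝ) + 1) ≤ f z (p.2 + p.1 + 1) := by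
        apply div_le_self (f_nonneg h0 _)
        have : (0:ℝ) ≤ (p.1:ℝ) := Nat.cast_nonneg _
        linarith
    _ ≤ z ^ (p.2 + p.1 + 1 + 1) := f_le h0 _
    _ = z ^ (p.1 + 1) * z ^ (p.2 + 1) := by
        rw [← pow_add]; congr 1; omega

lemma summable_F (h0 : 0 ≤ z) (h1 : z < 1) : Summable (F z) := by
  have hb : Summable (fun p : ℕ × ℕ => z ^ (p.1 + 1) * z ^ (p.2 + 1)) := by
    have hnn : (0:ℕ → ℝ) ≤ fun n : ℕ => z ^ (n + 1) := fun n => pow_nonneg h0 _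
    exact @Summable.mul_of_nonneg ℕ ℕ (fun n => z ^ (n+1)) (fun n => z ^ (n+1))
      (summable_geom_shift h0 h1 1) (summable_geom_shift h0 h1 1) hnn hnn
  exact Summable.of_nonneg_of_le (F_nonneg h0) (F_le h0) hb

lemma summable_T_div (h0 : 0 ≤ z) (h1 : z < 1) :
    Summable (fun b : ℕ => T z b / ((b : ℝ) + 1)) := by
  apply Summable.of_nonneg_of_le
    (fun b => div_nonneg (T_nonneg h0 b) (by positivity)) (fun b => ?_)
    ((by simpa [← add_assoc] using summable_geom_shift h0 h1 1 : Summable (fun b : ℕ => z ^ (b+1))).div_const (1 - z))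
  calc T z b / ((b : ℝ) + 1) ≤ T z b := by
        apply div_le_self (T_nonneg h0 b)
        have : (0:ℝ) ≤ (b:ℝ) := Nat.cast_nonneg _
        linarith
    _ ≤ z ^ (b + 1) / (1 - z) := T_le h0 h1 b

lemma summable_T_succ_div (h0 : 0 ≤ z) (h1 : z < 1) :
    Summable (fun b : ℕ => T z (b + 1) / ((b : ℝ) + 1)) := by
  apply Summable.of_nonneg_of_le
    (fun b => div_nonneg (T_nonneg h0 _) (by positivity)) (fun b => ?_)
    (summable_T_div h0 h1)
  apply div_le_div_of_nonneg_right ?_ (by positivity)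
  · rw [T_rec h0 h1 b]
    have := f_nonneg h0 b
    linarith

lemma tsum_F (h0 : 0 ≤ z) (h1 : z < 1) :
    ∑' p : ℕ × ℕ, F z p = ∑' b : ℕ, T z (b + 1) / ((b : ℝ) + 1) := by
  rw [Summable.tsum_prod' (summable_F h0 h1) (summable_F h0 h1).prod_factor]
  refine tsum_congr fun b => ?_
  rw [show (fun a : ℕ => F z (b, a)) = fun a : ℕ => f z (a + (b+1)) / ((b : ℝ) + 1) from rfl]
  rw [tsum_div_const]
  rfl

lemma F_add_swap (h0 : 0 ≤ z) (p : ℕ × ℕ) :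
    F z p + F z p.swap = f z p.1 * f z p.2 := by
  obtain ⟨b, a⟩ := p
  simp only [F, f, Prod.swap_prod_mk]
  have h1 : ((b:ℝ) + 1) ≠ 0 := by positivity
  have h2 : ((a:ℝ) + 1) ≠ 0 := by positivity
  have h3 : ((a + b + 1 : ℕ) : ℝ) + 1 ≠ 0 := by positivity
  have h4 : ((b + a + 1 : ℕ) : ℝ) + 1 ≠ 0 := by positivity
  have e1 : z ^ (a + b + 1 + 1) = z ^ (a + 1) * z ^ (b + 1) := by
    rw [← pow_add]; congr 1; omega
  have e2 : z ^ (b + a + 1 + 1) = z ^ (a + 1) * z ^ (b + 1) := by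
    rw [← pow_add]; congr 1; omega
  rw [e1, e2]
  push_cast
  field_simp
  ring

lemma two_A1 (h0 : 0 ≤ z) (h1 : z < 1) :
    2 * ∑' b : ℕ, T z (b + 1) / ((b : ℝ) + 1) = T z 0 * T z 0 := by
  have hswap : Summable (fun p : ℕ × ℕ => F z p.swap) :=
    (Equiv.prodComm ℕ ℕ).summable_iff.2 (summable_F h0 h1)
  have hts : ∑' p : ℕ × ℕ, F z p.swap = ∑' p : ℕ × ℕ, F z p :=
    (Equiv.prodComm ℕ ℕ).tsum_eq (F z)
  have hmul : Summable (fun p : ℕ × ℕ => f z p.1 * f z p.2) :=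
    Summable.mul_of_nonneg (summable_f h0 h1) (summable_f h0 h1)
      (fun n => f_nonneg h0 n) (fun n => f_nonneg h0 n)
  have key : ∑' p : ℕ × ℕ, (F z p + F z p.swap) = T z 0 * T z 0 := by
    rw [tsum_congr (F_add_swap h0)]
    rw [Summable.tsum_prod' hmul hmul.prod_factor]
    have : ∀ b : ℕ, ∑' a : ℕ, f z b * f z a = f z b * T z 0 := by
      intro b
      rw [tsum_mul_left]
      congr 1
    rw [tsum_congr this, tsum_mul_right]
    rw [mul_comm]
    congr 1
  rw [Summable.tsum_add (summable_F h0 h1) hswap, hts, tsum_F h0 h1] at key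
  linarith [key]

end Stmt17Aux

namespace Stmt17Aux

variable {z : ℝ}

noncomputable def w (z : ℝ) (b : ℕ) : ℝ := (z⁻¹) ^ b * (T z b) ^ 2

lemma w_nonneg (h0 : 0 ≤ z) (b : ℕ) : 0 ≤ w z b := by
  unfold w; positivity

lemma w_le (h0 : 0 < z) (h1 : z < 1) (b : ℕ) :
    w z b ≤ z ^ (b + 2) / (1 - z) ^ 2 := by
  have hz : z ≠ 0 := ne_of_gt h0
  have hT : (T z b) ^ 2 ≤ (z ^ (b + 1) / (1 - z)) ^ 2 :=
    pow_le_pow_left₀ (T_nonneg h0.le b) (T_le h0.le h1 b) 2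
  have h2 : w z b ≤ (z⁻¹) ^ b * (z ^ (b + 1) / (1 - z)) ^ 2 := by
    unfold w
    apply mul_le_mul_of_nonneg_left hT (by positivity)
  refine h2.trans_eq ?_
  rw [div_pow, ← pow_mul, inv_pow]
  rw [show (b + 1) * 2 = b + (b + 2) by omega, pow_add]
  field_simp

lemma summable_w (h0 : 0 < z) (h1 : z < 1) : Summable (w z) := by
  apply Summable.of_nonneg_of_le (w_nonneg h0.le) (w_le h0 h1)
  exact (summable_geom_shift h0.le h1 2).div_const _

lemma summable_w_succ (h0 : 0 < z) (h1 : z < 1) :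
    Summable (fun b : ℕ => w z (b + 1)) :=
  (summable_nat_add_iff 1).2 (summable_w h0 h1)

lemma w_rec (h0 : 0 < z) (h1 : z < 1) (b : ℕ) :
    w z b - z * w z (b + 1) = z * (T z b + T z (b + 1)) / ((b : ℝ) + 1) := by
  have hz : z ≠ 0 := ne_of_gt h0
  have hb : ((b : ℝ) + 1) ≠ 0 := by positivity
  have key : (z⁻¹) ^ b * z ^ (b + 1) = z := by
    rw [inv_pow, pow_succ, ← mul_assoc, inv_mul_cancel₀ (pow_ne_zero b hz), one_mul]
  have hrec := T_rec h0.le h1 b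
  unfold w f at *
  rw [hrec]
  have hw1 : (z⁻¹) ^ b = z / z ^ (b + 1) := by
    rw [eq_div_iff (pow_ne_zero _ hz)]; exact key
  have hw2 : (z⁻¹) ^ (b + 1) = 1 / z ^ (b + 1) := by
    rw [inv_pow, one_div]
  rw [hw1, hw2]
  have hp : z ^ (b + 1) ≠ 0 := pow_ne_zero _ hz
  field_simp
  ring

end Stmt17Aux

namespace Stmt17Aux

variable {z : ℝ}

lemma U_eq (h0 : 0 < z) (h1 : z < 1) :
    (∑' b : ℕ, w z (b + 1)) = z * Li z / (1 - z) - (T z 0) ^ 2 := by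
  have hz1 : (1 : ℝ) - z ≠ 0 := by intro h; linarith
  have hsw := summable_w h0 h1
  have hsws := summable_w_succ h0 h1
  set U := ∑' b : ℕ, w z (b + 1) with hU
  set A1 := ∑' b : ℕ, T z (b + 1) / ((b : ℝ) + 1) with hA1
  set L := T z 0 with hL
  have e1 : ∑' b : ℕ, (w z b - z * w z (b + 1)) = (w z 0 + U) - z * U := by
    rw [Summable.tsum_sub hsw (hsws.mul_left z), Summable.tsum_eq_zero_add hsw, tsum_mul_left]
  have e2 : ∀ b : ℕ, w z b - z * w z (b + 1)
      = z * (T z b / ((b : ℝ) + 1)) + z * (T z (b + 1) / ((b : ℝ) + 1)) := by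
    intro b
    rw [w_rec h0 h1 b]
    ring
  have e3 : ∑' b : ℕ, (w z b - z * w z (b + 1))
      = z * (∑' b : ℕ, T z b / ((b : ℝ) + 1)) + z * A1 := by
    rw [tsum_congr e2, Summable.tsum_add ((summable_T_div h0.le h1).mul_left z)
      ((summable_T_succ_div h0.le h1).mul_left z), tsum_mul_left, tsum_mul_left]
  have hA0 : ∑' b : ℕ, T z b / ((b : ℝ) + 1) = A1 + Li z := by
    have hpt : ∀ b : ℕ, T z b / ((b : ℝ) + 1)
        = T z (b + 1) / ((b : ℝ) + 1) + z ^ (b + 1) / ((b : ℝ) + 1) ^ 2 := by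
      intro b
      have hb : ((b : ℝ) + 1) ≠ 0 := by positivity
      rw [T_rec h0.le h1 b]
      unfold f
      field_simp
      ring
    rw [tsum_congr hpt, Summable.tsum_add (summable_T_succ_div h0.le h1) (summable_Li h0.le h1)]
    rfl
  have h2A1 : 2 * A1 = L * L := two_A1 h0.le h1
  have hw0 : w z 0 = L ^ 2 := by simp [w, hL]
  have main : (L ^ 2 + U) - z * U = z * (A1 + Li z) + z * A1 := by
    rw [← hw0, ← e1, e3, hA0]
  have : U * (1 - z) = z * Li z - (1 - z) * L ^ 2 := by nlinarith [main, h2A1]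
  field_simp
  linarith [this]

end Stmt17Aux

namespace Stmt17Aux

variable {z : ℝ}

/-- Triple-sum term indexed by `(a,b,c) : ℕ×ℕ×ℕ` (shifted from `ℕ+`). -/
noncomputable def g (z : ℝ) (p : ℕ × ℕ × ℕ) : ℝ :=
  z ^ (p.1 + p.2.1 + p.2.2 + 3) /
    (((p.1 : ℝ) + (p.2.1 : ℝ) + 2) * ((p.2.1 : ℝ) + (p.2.2 : ℝ) + 2))

lemma g_nonneg (h0 : 0 ≤ z) (p : ℕ × ℕ × ℕ) : 0 ≤ g z p := by
  unfold g; positivity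

lemma g_le (h0 : 0 ≤ z) (p : ℕ × ℕ × ℕ) :
    g z p ≤ z ^ (p.1 + 1) * (z ^ (p.2.1 + 1) * z ^ (p.2.2 + 1)) := by
  obtain ⟨a, b, c⟩ := p
  unfold g
  have h2 : (1:ℝ) ≤ ((a : ℝ) + (b : ℝ) + 2) * ((b : ℝ) + (c : ℝ) + 2) := by
    have ha : (0:ℝ) ≤ a := Nat.cast_nonneg a
    have hb : (0:ℝ) ≤ b := Nat.cast_nonneg b
    have hc : (0:ℝ) ≤ c := Nat.cast_nonneg c
    nlinarith
  calc z ^ (a + b + c + 3) / (((a : ℝ) + (b : ℝ) + 2) * ((b : ℝ) + (c : ℝ) + 2))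
      ≤ z ^ (a + b + c + 3) := div_le_self (by positivity) h2
    _ = z ^ (a + 1) * (z ^ (b + 1) * z ^ (c + 1)) := by
        rw [← pow_add, ← pow_add]; congr 1; omega

lemma summable_g (h0 : 0 ≤ z) (h1 : z < 1) : Summable (g z) := by
  have hnn : (0:ℕ → ℝ) ≤ fun n : ℕ => z ^ (n + 1) := fun n => pow_nonneg h0 _
  have hb2 : Summable (fun p : ℕ × ℕ => z ^ (p.1 + 1) * z ^ (p.2 + 1)) :=
    @Summable.mul_of_nonneg ℕ ℕ (fun n => z ^ (n+1)) (fun n => z ^ (n+1))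
      (summable_geom_shift h0 h1 1) (summable_geom_shift h0 h1 1) hnn hnn
  have hnn2 : (0:ℕ × ℕ → ℝ) ≤ fun p : ℕ × ℕ => z ^ (p.1 + 1) * z ^ (p.2 + 1) :=
    fun p => by have := hnn p.1; have := hnn p.2; positivity
  have hb3 : Summable (fun p : ℕ × ℕ × ℕ => z ^ (p.1 + 1) * (z ^ (p.2.1 + 1) * z ^ (p.2.2 + 1))) :=
    @Summable.mul_of_nonneg ℕ (ℕ × ℕ) (fun n => z ^ (n+1))
      (fun p => z ^ (p.1 + 1) * z ^ (p.2 + 1))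
      (summable_geom_shift h0 h1 1) hb2 hnn hnn2
  exact Summable.of_nonneg_of_le (g_nonneg h0) (g_le h0) hb3

/-- Reordering equivalence `(b,a,c) ↦ (a,b,c)`. -/
def e3 : ℕ × ℕ × ℕ ≃ ℕ × ℕ × ℕ where
  toFun p := (p.2.1, p.1, p.2.2)
  invFun p := (p.2.1, p.1, p.2.2)
  left_inv := fun ⟨a, b, c⟩ => rfl
  right_inv := fun ⟨a, b, c⟩ => rfl

lemma g_eq (h0 : 0 < z) (a b c : ℕ) :
    g z (a, b, c) = (z⁻¹) ^ (b + 1) * (f z (a + b + 1) * f z (c + b + 1)) := by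
  have hz : z ≠ 0 := ne_of_gt h0
  unfold g f
  have e1 : z ^ (a + b + 1 + 1) = z ^ (a + b + 2) := by norm_num
  have e2 : z ^ (c + b + 1 + 1) = z ^ (c + b + 2) := by norm_num
  have e4 : z ^ (a + b + 2) * z ^ (c + b + 2) = z ^ (a + b + c + 3) * z ^ (b + 1) := by
    rw [← pow_add, ← pow_add]; congr 1; omega
  have hd1 : ((a + b + 1 : ℕ) : ℝ) + 1 = (a : ℝ) + (b : ℝ) + 2 := by push_cast; ring
  have hd2 : ((c + b + 1 : ℕ) : ℝ) + 1 = (b : ℝ) + (c : ℝ) + 2 := by push_cast; ring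
  rw [e1, e2, hd1, hd2, inv_pow]
  rw [div_mul_div_comm, e4]
  have hp : z ^ (b + 1) ≠ 0 := pow_ne_zero _ hz
  have hD : ((a : ℝ) + (b : ℝ) + 2) * ((b : ℝ) + (c : ℝ) + 2) ≠ 0 := by positivity
  field_simp

lemma tsum_g (h0 : 0 < z) (h1 : z < 1) :
    ∑' p : ℕ × ℕ × ℕ, g z p = ∑' b : ℕ, w z (b + 1) := by
  have hg := summable_g h0.le h1
  have hge3 : Summable (g z ∘ e3) := e3.summable_iff.2 hg
  rw [← e3.tsum_eq (g z)]
  have hge3' : Summable (fun q : ℕ × ℕ × ℕ => g z (e3 q)) := hge3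
  rw [show (fun q : ℕ × ℕ × ℕ => g z (e3 q)) = fun q : ℕ × ℕ × ℕ => g z (q.2.1, q.1, q.2.2) from rfl] at hge3'
  calc ∑' q : ℕ × ℕ × ℕ, g z (e3 q)
      = ∑' (b : ℕ) (q : ℕ × ℕ), g z (q.1, b, q.2) := by
        exact Summable.tsum_prod' hge3' hge3'.prod_factor
    _ = ∑' b : ℕ, w z (b + 1) := by
        refine tsum_congr fun b => ?_
        have hs : Summable (fun n : ℕ => f z (n + (b + 1))) := summable_f_shift h0.le h1 (b + 1)
        have hnn : (0:ℕ → ℝ) ≤ fun n : ℕ => f z (n + (b + 1)) := fun n => f_nonneg h0.le _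
        have hprod : Summable (fun q : ℕ × ℕ => f z (q.1 + (b+1)) * f z (q.2 + (b+1))) :=
          @Summable.mul_of_nonneg ℕ ℕ (fun n => f z (n + (b+1))) (fun n => f z (n + (b+1)))
            hs hs hnn hnn
        have hpt : ∀ q : ℕ × ℕ, g z (q.1, b, q.2)
            = (z⁻¹) ^ (b + 1) * (f z (q.1 + (b+1)) * f z (q.2 + (b+1))) := by
          intro q
          exact g_eq h0 q.1 b q.2
        rw [tsum_congr hpt, tsum_mul_left]
        have : ∑' q : ℕ × ℕ, f z (q.1 + (b+1)) * f z (q.2 + (b+1)) = T z (b+1) * T z (b+1) := by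
          rw [Summable.tsum_prod' hprod hprod.prod_factor]
          have : ∀ n : ℕ, ∑' m : ℕ, f z (n + (b+1)) * f z (m + (b+1)) = f z (n + (b+1)) * T z (b+1) := by
            intro n
            rw [tsum_mul_left]
            rfl
          rw [tsum_congr this, tsum_mul_right]
          rfl
        rw [this]
        unfold w
        ring

end Stmt17Aux

open Stmt17Aux in
/-- For `0 ≤ z < 1`,
`Σ_{a,b,c≥1} z^{a+b+c}/((a+b)(b+c)) = z·Li₂(z)/(1-z) - log(1-z)²`,
where `Li₂(z) = Σ_{k≥1} z^k/k²`. -/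
theorem stmt_17 (z : ℝ) (h0 : 0 ≤ z) (h1 : z < 1) :
    Summable (fun p : ℕ+ × ℕ+ × ℕ+ =>
      z ^ ((p.1 : ℕ) + (p.2.1 : ℕ) + (p.2.2 : ℕ))
        / (((p.1 : ℝ) + (p.2.1 : ℝ)) * ((p.2.1 : ℝ) + (p.2.2 : ℝ))))
    ∧ ∑' p : ℕ+ × ℕ+ × ℕ+,
        z ^ ((p.1 : ℕ) + (p.2.1 : ℕ) + (p.2.2 : ℕ))
          / (((p.1 : ℝ) + (p.2.1 : ℝ)) * ((p.2.1 : ℝ) + (p.2.2 : ℝ)))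
      = z * (∑' k : ℕ+, z ^ (k : ℕ) / (k : ℝ) ^ 2) / (1 - z)
        - (Real.log (1 - z)) ^ 2 := by
  set Fs : ℕ+ × ℕ+ × ℕ+ → ℝ := fun p =>
    z ^ ((p.1 : ℕ) + (p.2.1 : ℕ) + (p.2.2 : ℕ))
      / (((p.1 : ℝ) + (p.2.1 : ℝ)) * ((p.2.1 : ℝ) + (p.2.2 : ℝ))) with hFs
  rcases h0.lt_or_eq with hz | hz
  · -- 0 < z
    set E : ℕ × ℕ × ℕ ≃ ℕ+ × ℕ+ × ℕ+ :=
      Equiv.pnatEquivNat.symm.prodCongr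
        (Equiv.pnatEquivNat.symm.prodCongr Equiv.pnatEquivNat.symm) with hE
    have hcomp : ∀ q : ℕ × ℕ × ℕ, Fs (E q) = g z q := by
      rintro ⟨a, b, c⟩
      simp only [hFs, E, Equiv.prodCongr_apply, Equiv.pnatEquivNat_symm_apply, Prod.map,
        g, Nat.succPNat_coe, Nat.succ_eq_add_one]
      rw [show (a + 1) + (b + 1) + (c + 1) = a + b + c + 3 by omega]
      push_cast
      ring_nf
    have hgE : Summable (Fs ∘ E) := by
      rw [show Fs ∘ E = g z from funext hcomp]
      exact summable_g h0 h1
    have hsum : Summable Fs := E.summable_iff.1 hgE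
    have htsum : ∑' p : ℕ+ × ℕ+ × ℕ+, Fs p = ∑' q : ℕ × ℕ × ℕ, g z q := by
      rw [← E.tsum_eq Fs]
      exact tsum_congr hcomp
    have hLi : (∑' k : ℕ+, z ^ (k : ℕ) / (k : ℝ) ^ 2) = Li z := by
      rw [← Equiv.pnatEquivNat.symm.tsum_eq (fun k : ℕ+ => z ^ (k : ℕ) / (k : ℝ) ^ 2)]
      refine tsum_congr fun n => ?_
      simp only [Equiv.pnatEquivNat_symm_apply, Nat.succPNat_coe, Nat.succ_eq_add_one]
      push_cast
      ring_nf
    have hL : (T z 0) ^ 2 = (Real.log (1 - z)) ^ 2 := by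
      rw [T_zero h0 h1, neg_pow]
      ring
    refine ⟨hsum, ?_⟩
    rw [htsum, tsum_g hz h1, U_eq hz h1, hLi, hL]
  · -- z = 0
    subst hz
    have hFs0 : Fs = fun _ => (0:ℝ) := by
      funext p
      simp only [hFs]
      rw [zero_pow (by have := p.1.pos; omega)]
      simp
    constructor
    · rw [hFs0]; exact summable_zero
    · rw [hFs0, tsum_zero]
      have hfun : (fun k : ℕ+ => (0:ℝ) ^ (k : ℕ) / (k : ℝ) ^ 2) = fun _ => (0:ℝ) := by
        funext k
        rw [zero_pow (by have := k.pos; omega)]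
        simp
      rw [hfun, tsum_zero]
      simp
end

section
/- Let g,n with 2g-2+n > 0, fix L ∈ ℝ₊ⁿ, and let ℓ_G : MF_Σ → ℝ≥0 be the combinatorial length function of a point G of the combinatorial Teichmüller space, which is homogeneous of degree 1 and additive under adding boundary-parallel cylinders: ℓ_G(Φ(F,x)) = ℓ_G(F) + Σᵢ xᵢLᵢ. Then the Thurston volume B^•(G) = μ•({F' ∈ MF•_Σ : ℓ_G(F') ≤ 1}) under the measure-preserving homeomorphism Φ : MF_Σ × ℝ≥0ⁿ → MF•_Σ equals [(6g-6+2n)!/(6g-6+3n)!] · B(G)/∏ᵢ₌₁ⁿ Lᵢ, where B(G) = μTh({F : ℓ_G(F) ≤ 1}). -/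
/-!
Absorb the cylinder coordinates into the base one at a time. If `μ {ℓ ≤ t} = t ^ d * B`, give
`X × [0, ∞)` the measure `μ ⊗ vol` and the length `ℓ F + x * c`. By the layer-cake formula its
`t`-sublevel set has measure
`c⁻¹ ∫ (t - ℓ)⁺ dμ = c⁻¹ ∫₀ᵗ μ {ℓ ≤ s} ds = t ^ (d + 1) * B / ((d + 1) c)`, so it is again
homogeneous, now of degree `d + 1`. After `n` steps the factors `1 / ((d + k) Lₖ)` multiply to
`d! / (d + n)! / ∏ Lᵢ`.
-/

open MeasureTheory Set

section ProdLemmas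

variable {X Y Z : Type*} [MeasurableSpace X] [MeasurableSpace Y] [MeasurableSpace Z]

theorem MeasureTheory.MeasurePreserving.id_prod {ν : Measure Y} {ρ : Measure Z} [SFinite ν]
    [SFinite ρ] {e : Y → Z} (he : MeasurePreserving e ν ρ) (μ : Measure X) :
    MeasurePreserving (Prod.map id e) (μ.prod ν) (μ.prod ρ) := by
  have hm : Measurable (Prod.map id e : X × Y → X × Z) := measurable_id.prodMap he.measurable
  refine ⟨hm, Measure.ext fun s hs => ?_⟩
  rw [Measure.map_apply hm hs, Measure.prod_apply hs, Measure.prod_apply (hm hs)]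
  exact lintegral_congr fun F => he.measure_preimage (measurable_prodMk_left hs).nullMeasurableSet

theorem MeasureTheory.Measure.prod_restrict_right_apply (μ : Measure X) (ν : Measure Y) [SFinite ν]
    {s : Set (X × Y)} (hs : MeasurableSet s) {t : Set Y} (ht : MeasurableSet t) :
    μ.prod (ν.restrict t) s = μ.prod ν (s ∩ univ ×ˢ t) := by
  rw [Measure.prod_apply hs, Measure.prod_apply (hs.inter (MeasurableSet.univ.prod ht))]
  refine lintegral_congr fun F => ?_
  rw [Measure.restrict_apply (measurable_prodMk_left hs)]
  congr 1
  ext y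
  simp

end ProdLemmas

theorem lintegral_Ioc_ofReal_sub_pow (d : ℕ) {t : ℝ} (ht : 0 ≤ t) :
    ∫⁻ s in Ioc 0 t, ENNReal.ofReal ((t - s) ^ d) = ENNReal.ofReal (t ^ (d + 1) / (d + 1)) := by
  rw [← ofReal_integral_eq_lintegral_ofReal
    (by fun_prop : Continuous fun s : ℝ => (t - s) ^ d).integrableOn_Ioc
    ((ae_restrict_iff' measurableSet_Ioc).2
      (.of_forall fun s hs => pow_nonneg (by linarith [hs.2]) d)),
    ← intervalIntegral.integral_of_le ht, intervalIntegral.integral_comp_sub_left (fun x => x ^ d)]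
  simp [integral_pow]

section Homogeneous

variable {X : Type*} [MeasurableSpace X]

theorem ae_nonneg_prod_Ici {μ : Measure X} {ℓ : X → ℝ} (hℓ : Measurable ℓ)
    (hpos : ∀ᵐ F ∂μ, 0 ≤ ℓ F) {c : ℝ} (hc : 0 ≤ c) :
    ∀ᵐ p ∂μ.prod (volume.restrict (Ici 0)), 0 ≤ ℓ p.1 + p.2 * c := by
  refine (Measure.ae_prod_iff_ae_ae (measurableSet_le measurable_const (by fun_prop))).2 ?_
  filter_upwards [hpos] with F hF
  exact ae_restrict_of_forall_mem measurableSet_Ici fun x (hx : 0 ≤ x) => by positivity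

def SublevelHomogeneous (μ : Measure X) (ℓ : X → ℝ) (d : ℕ) : Prop :=
  ∀ t : ℝ, 0 ≤ t → μ {F | ℓ F ≤ t} = ENNReal.ofReal (t ^ d) * μ {F | ℓ F ≤ 1}

namespace SublevelHomogeneous

variable {μ : Measure X} {ℓ : X → ℝ} {d : ℕ}

theorem lintegral_ofReal_sub (h : SublevelHomogeneous μ ℓ d) (hℓ : Measurable ℓ)
    (hpos : ∀ᵐ F ∂μ, 0 ≤ ℓ F) {t : ℝ} (ht : 0 ≤ t) :
    ∫⁻ F, ENNReal.ofReal (t - ℓ F) ∂μ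
      = ENNReal.ofReal (t ^ (d + 1) / (d + 1)) * μ {F | ℓ F ≤ 1} := by
  have layer : ∫⁻ F, ENNReal.ofReal (t - ℓ F) ∂μ = ∫⁻ s in Ioi 0, μ {F | ℓ F ≤ t - s} := by
    have := lintegral_eq_lintegral_meas_le μ (.of_forall fun F => le_max_right (t - ℓ F) 0)
      (by fun_prop)
    simp only [ENNReal.ofReal_max, ENNReal.ofReal_zero, zero_le, max_eq_left] at this
    rw [this]
    refine setLIntegral_congr_fun measurableSet_Ioi fun s (hs : 0 < s) => ?_
    congr 1
    ext F
    simp [hs.not_ge, le_sub_comm]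
  have above : ∫⁻ s in Ioi t, μ {F | ℓ F ≤ t - s} = 0 := by
    refine (setLIntegral_congr_fun measurableSet_Ioi fun s (hs : t < s) => ?_).trans lintegral_zero
    refine measure_mono_null ?_ (ae_iff.1 hpos)
    intro F (hF : ℓ F ≤ t - s) (hF0 : 0 ≤ ℓ F)
    linarith
  have below : ∫⁻ s in Ioc 0 t, μ {F | ℓ F ≤ t - s}
      = ∫⁻ s in Ioc 0 t, ENNReal.ofReal ((t - s) ^ d) * μ {F | ℓ F ≤ 1} :=
    setLIntegral_congr_fun measurableSet_Ioc fun s hs => h (t - s) (by linarith [hs.2])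
  rw [layer, ← Ioc_union_Ioi_eq_Ioi ht, lintegral_union measurableSet_Ioi (Ioc_disjoint_Ioi le_rfl),
    above, below, add_zero, lintegral_mul_const _ (by fun_prop), lintegral_Ioc_ofReal_sub_pow d ht]

theorem measure_prod_Ici_sublevel (h : SublevelHomogeneous μ ℓ d) (hℓ : Measurable ℓ)
    (hpos : ∀ᵐ F ∂μ, 0 ≤ ℓ F) {c : ℝ} (hc : 0 < c) {t : ℝ} (ht : 0 ≤ t) :
    μ.prod (volume.restrict (Ici 0)) {p | ℓ p.1 + p.2 * c ≤ t}
      = ENNReal.ofReal (t ^ (d + 1) / ((d + 1) * c)) * μ {F | ℓ F ≤ 1} := by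
  have slice (F : X) : volume.restrict (Ici 0) {x : ℝ | ℓ F + x * c ≤ t}
      = ENNReal.ofReal c⁻¹ * ENNReal.ofReal (t - ℓ F) := by
    have : {x : ℝ | ℓ F + x * c ≤ t} ∩ Ici 0 = Icc 0 ((t - ℓ F) / c) := by
      ext x
      simp [le_div_iff₀ hc, le_sub_iff_add_le', and_comm]
    rw [Measure.restrict_apply (measurableSet_le (by fun_prop) measurable_const), this,
      Real.volume_Icc, sub_zero, div_eq_inv_mul, ENNReal.ofReal_mul (inv_nonneg.2 hc.le)]
  rw [Measure.prod_apply (measurableSet_le (by fun_prop) measurable_const)]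
  simp only [preimage_ofPred_eq, slice]
  rw [lintegral_const_mul _ (by fun_prop), h.lintegral_ofReal_sub hℓ hpos ht, ← mul_assoc,
    ← ENNReal.ofReal_mul (inv_nonneg.2 hc.le), inv_mul_eq_div, div_div]

theorem prod_Ici (h : SublevelHomogeneous μ ℓ d) (hℓ : Measurable ℓ)
    (hpos : ∀ᵐ F ∂μ, 0 ≤ ℓ F) {c : ℝ} (hc : 0 < c) :
    SublevelHomogeneous (μ.prod (volume.restrict (Ici 0))) (fun p => ℓ p.1 + p.2 * c) (d + 1) := by
  intro t ht
  rw [h.measure_prod_Ici_sublevel hℓ hpos hc ht, h.measure_prod_Ici_sublevel hℓ hpos hc zero_le_one,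
    ← mul_assoc, ← ENNReal.ofReal_mul (by positivity), one_pow, mul_one_div]

theorem measure_prod_pi_Ici_sublevel (h : SublevelHomogeneous μ ℓ d) (hℓ : Measurable ℓ)
    (hpos : ∀ᵐ F ∂μ, 0 ≤ ℓ F) {n : ℕ} {L : Fin n → ℝ} (hL : ∀ i, 0 < L i) :
    μ.prod (Measure.pi fun _ : Fin n => volume.restrict (Ici (0 : ℝ)))
        {p | ℓ p.1 + ∑ i, p.2 i * L i ≤ 1}
      = ENNReal.ofReal ((d.factorial : ℝ) / (d + n).factorial / ∏ i, L i) * μ {F | ℓ F ≤ 1} := by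
  induction n generalizing X d with
  | zero =>
    have : {p : X × (Fin 0 → ℝ) | ℓ p.1 + ∑ i, p.2 i * L i ≤ 1} = {F | ℓ F ≤ 1} ×ˢ univ := by
      ext; simp
    rw [this, Measure.prod_prod, Measure.pi_univ]
    simp [div_self (by positivity : (d.factorial : ℝ) ≠ 0)]
  | succ n ih =>
    set ρ : Measure ℝ := volume.restrict (Ici 0)
    have hL0 := hL 0
    have absorbed := ih (h.prod_Ici hℓ hpos hL0) (by fun_prop) (ae_nonneg_prod_Ici hℓ hpos hL0.le)
      (L := fun i => L i.succ) fun i => hL i.succ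
    let T : Set (X × ℝ × (Fin n → ℝ)) := {q | ℓ q.1 + q.2.1 * L 0 + ∑ i, q.2.2 i * L i.succ ≤ 1}
    have hT : MeasurableSet T := measurableSet_le (by fun_prop) measurable_const
    have split : μ.prod (Measure.pi fun _ : Fin (n + 1) => ρ) {p | ℓ p.1 + ∑ i, p.2 i * L i ≤ 1}
        = ((μ.prod ρ).prod (Measure.pi fun _ : Fin n => ρ))
            {q | ℓ q.1.1 + q.1.2 * L 0 + ∑ i, q.2 i * L i.succ ≤ 1} := by
      calc _ = μ.prod (ρ.prod (Measure.pi fun _ : Fin n => ρ)) T := by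
            rw [← ((measurePreserving_piFinSuccAbove (fun _ => ρ) 0).id_prod μ).measure_preimage
              hT.nullMeasurableSet]
            congr 1
            ext
            simp [T, Fin.sum_univ_succ, add_assoc, Fin.tail]
        _ = _ := ((measurePreserving_prodAssoc μ ρ _).measure_preimage hT.nullMeasurableSet).symm
    rw [split, absorbed, h.measure_prod_Ici_sublevel hℓ hpos hL0 zero_le_one, ← mul_assoc,
      ← ENNReal.ofReal_mul (div_nonneg (by positivity) (Finset.prod_pos fun i _ => hL i.succ).le),
      one_pow, Fin.prod_univ_succ, Nat.factorial_succ,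
      show d + 1 + n = d + (n + 1) by omega]
    congr 2
    push_cast
    field_simp

end SublevelHomogeneous

end Homogeneous

theorem stmt_18_general (g n : ℕ)
    (X : Type*) [MeasurableSpace X] (μ : Measure X)
    (ℓ : X → ℝ) (hmeas : Measurable ℓ) (hpos : ∀ x, 0 ≤ ℓ x)
    (L : Fin n → ℝ) (hL : ∀ i, 0 < L i)
    (hhom : ∀ t : ℝ, 0 ≤ t →
      μ {F | ℓ F ≤ t} = ENNReal.ofReal (t ^ (6 * g + 2 * n - 6)) * μ {F | ℓ F ≤ 1}) :
    (μ.prod (Measure.pi fun _ : Fin n => volume))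
        {p : X × (Fin n → ℝ) | (∀ i, 0 ≤ p.2 i) ∧ ℓ p.1 + ∑ i, p.2 i * L i ≤ 1}
      = ENNReal.ofReal
          (((6 * g + 2 * n - 6).factorial : ℝ) / ((6 * g + 2 * n - 6 + n).factorial : ℝ)
            / ∏ i, L i)
        * μ {F | ℓ F ≤ 1} := by
  have hS : MeasurableSet {p : X × (Fin n → ℝ) | ℓ p.1 + ∑ i, p.2 i * L i ≤ 1} :=
    measurableSet_le (by fun_prop) measurable_const
  have nonneg : {p : X × (Fin n → ℝ) | (∀ i, 0 ≤ p.2 i) ∧ ℓ p.1 + ∑ i, p.2 i * L i ≤ 1}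
      = {p | ℓ p.1 + ∑ i, p.2 i * L i ≤ 1} ∩ univ ×ˢ univ.pi fun _ => Ici 0 := by
    ext
    simp [Pi.le_def, and_comm]
  rw [nonneg, ← Measure.prod_restrict_right_apply μ _ hS
    (MeasurableSet.univ_pi fun _ => measurableSet_Ici), Measure.restrict_pi_pi]
  exact SublevelHomogeneous.measure_prod_pi_Ici_sublevel hhom hmeas (.of_forall hpos) hL

/-- Abstract boundary-cylinder volume lemma. Let `d = 6g-6+2n`, `μ` a measure on `X`
whose sublevel-set measures of a nonnegative measurable length function `ℓ` are
homogeneous of degree `d`. Then the measure (w.r.t. `μ ⊗ Lebesgue`) of the unit ball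
`{(F,x) : x ≥ 0, ℓ(F) + Σᵢ xᵢLᵢ ≤ 1}` equals
`(d!/(d+n)!) · μ{ℓ ≤ 1} / ∏ᵢ Lᵢ`. -/
theorem stmt_18 (g n : ℕ) (hgn : 2 < 2 * g + n)
    (X : Type*) [MeasurableSpace X] (μ : Measure X)
    (ℓ : X → ℝ) (hmeas : Measurable ℓ) (hpos : ∀ x, 0 ≤ ℓ x)
    (L : Fin n → ℝ) (hL : ∀ i, 0 < L i)
    (hhom : ∀ t : ℝ, 0 ≤ t →
      μ {F | ℓ F ≤ t} = ENNReal.ofReal (t ^ (6 * g + 2 * n - 6)) * μ {F | ℓ F ≤ 1}) :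
    (μ.prod (Measure.pi fun _ : Fin n => volume))
        {p : X × (Fin n → ℝ) | (∀ i, 0 ≤ p.2 i) ∧ ℓ p.1 + ∑ i, p.2 i * L i ≤ 1}
      = ENNReal.ofReal
          (((6 * g + 2 * n - 6).factorial : ℝ) / ((6 * g + 2 * n - 6 + n).factorial : ℝ)
            / ∏ i, L i)
        * μ {F | ℓ F ≤ 1} :=
  stmt_18_general g n X μ ℓ hmeas hpos L hL hhom
end
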